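/- arXiv:math/9907096 — 3 statements merged into one kernel-verified Lean document; each statement's English description precedes it below -/
import Mathlib

section
/- With t_d(s) defined by 1 - Σ_{d≥1} θ^{d-1} t_d(s) = exp(- Σ_{a≥0} θ^a s_a), for all d ≥ a+1 ≥ 2 one has ∂t_d/∂s_{a-1} = ∂t_{d+1}/∂s_a. -/
noncomputable section
open MvPowerSeries
open scoped Classical

/-- total degree of a monomial -/
def mdeg {σ : Type*} (m : σ →₀ ℕ) : ℕ := m.sum fun _ n => n

/-- formal partial derivative with respect to the variable `i` -/
def pd {σ : Type*} {R : Type*} [CommRing R] (i : σ) (f : MvPowerSeries σ R) :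
    MvPowerSeries σ R :=
  fun m => ((m i + 1 : ℕ) : R) * MvPowerSeries.coeff (m + Finsupp.single i 1) f

/-- formal exponential of a power series (coefficientwise stable sum) -/
def fexp {σ : Type*} {A : Type*} [CommRing A] [Algebra ℚ A] (u : MvPowerSeries σ A) :
    MvPowerSeries σ A :=
  fun m => ∑ k ∈ Finset.range (mdeg m + 1),
    (k.factorial : ℚ)⁻¹ • MvPowerSeries.coeff m (u ^ k)

/-- restriction of a monomial in the variables `θ ⊕ β` to the `β`-variables -/
def res {β : Type*} (m : (Unit ⊕ β) →₀ ℕ) : β →₀ ℕ :=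
  Finsupp.comapDomain Sum.inr m Sum.inr_injective.injOn

/-- the series `1 - ∑_{d ≥ 1} θ^{d-1} t_d` -/
def genT {β : Type*} {R : Type*} [CommRing R] (t : ℕ → MvPowerSeries β R) :
    MvPowerSeries (Unit ⊕ β) R :=
  fun m => (if m = 0 then 1 else 0) -
    MvPowerSeries.coeff (res m) (t (m (Sum.inl ()) + 1))

/-- the series `-∑_{a ≥ 0} θ^a s_a` -/
def expArg : MvPowerSeries (Unit ⊕ ℕ) ℚ :=
  fun m => ∑ᶠ a : ℕ,
    if m = Finsupp.single (Sum.inl ()) a + Finsupp.single (Sum.inr a) 1 then (-1 : ℚ) else 0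

/-- the defining identity `1 - ∑_{d≥1} θ^{d-1} t_d(s) = exp(-∑_{a≥0} θ^a s_a)` -/
def DefIdent (t : ℕ → MvPowerSeries ℕ ℚ) : Prop := genT t = fexp expArg

/-!
With `u = -∑ θ^a s_a` and `G = 1 - ∑ θ^(d-1) t_d = exp u`, the chain rule gives
`∂G/∂s_a = (∂u/∂s_a) G = -θ^a G`, hence `∂G/∂s_a = θ ∂G/∂s_(a-1)`. Comparing the coefficients
of `θ^d` on both sides yields `∂t_(d+1)/∂s_a = ∂t_d/∂s_(a-1)`. The exponential is only defined
coefficientwise, so the chain rule is checked on its partial sums, which agree with it in every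
fixed degree because `u` has no constant term.
-/

section Derivative

variable {σ R : Type*} [CommRing R]

lemma pd_eq_pderiv (i : σ) (f : MvPowerSeries σ R) : pd i f = pderiv R i f := by
  ext m
  rw [coeff_pderiv, mul_comm, ← Nat.cast_succ]
  rfl

end Derivative

section Exp

variable {σ A : Type*} [CommRing A] [Algebra ℚ A]

def expPartialSum (u : MvPowerSeries σ A) (N : ℕ) : MvPowerSeries σ A :=
  ∑ k ∈ Finset.range N, (k.factorial : ℚ)⁻¹ • u ^ k

lemma coeff_fexp_eq_coeff_expPartialSum {u : MvPowerSeries σ A} (hu : constantCoeff u = 0)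
    {m : σ →₀ ℕ} {N : ℕ} (hN : m.degree < N) :
    coeff m (fexp u) = coeff m (expPartialSum u N) := by
  rw [expPartialSum, map_sum]
  simp only [map_rat_smul]
  refine Finset.sum_subset (Finset.range_subset_range.mpr hN) fun k _ hk => ?_
  have hmk : m.degree < k := by simpa [Nat.lt_succ_iff] using hk
  rw [coeff_of_lt_order ((Nat.cast_lt.mpr hmk).trans_le
    (le_order_pow_of_constantCoeff_eq_zero k hu)), smul_zero]

lemma pderiv_expPartialSum_succ (i : σ) (u : MvPowerSeries σ A) (N : ℕ) :
    pderiv A i (expPartialSum u (N + 1)) = pderiv A i u * expPartialSum u N := by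
  simp only [expPartialSum, map_sum, map_rat_smul, Finset.mul_sum]
  rw [Finset.sum_range_succ', pow_zero, pderiv_one, smul_zero, add_zero]
  refine Finset.sum_congr rfl fun k _ => ?_
  have hfac : ((k + 1).factorial : ℚ)⁻¹ * (k + 1) = (k.factorial : ℚ)⁻¹ := by
    rw [Nat.factorial_succ]
    push_cast
    field_simp
  rw [pderiv_pow, Nat.add_sub_cancel, mul_assoc, ← nsmul_eq_mul, ← Nat.cast_smul_eq_nsmul ℚ,
    smul_smul, Nat.cast_succ, hfac, mul_smul_comm, mul_comm]

lemma pderiv_fexp (i : σ) {u : MvPowerSeries σ A} (hu : constantCoeff u = 0) :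
    pderiv A i (fexp u) = pderiv A i u * fexp u := by
  ext m
  have hdeg : (m + Finsupp.single i 1).degree < m.degree + 2 := by simp
  rw [coeff_pderiv, coeff_fexp_eq_coeff_expPartialSum hu hdeg, ← coeff_pderiv,
    pderiv_expPartialSum_succ, coeff_mul, coeff_mul]
  refine Finset.sum_congr rfl fun p hp => ?_
  have hp2 : p.2.degree < m.degree + 1 := by
    rw [← Finset.HasAntidiagonal.mem_antidiagonal.mp hp, map_add]
    omega
  rw [coeff_fexp_eq_coeff_expPartialSum hu hp2]

end Exp

section GeneratingSeries

variable {β R : Type*} [CommRing R]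

lemma coeff_genT (t : ℕ → MvPowerSeries β R) (M : (Unit ⊕ β) →₀ ℕ) :
    coeff M (genT t) = (if M = 0 then 1 else 0) - coeff (res M) (t (M (Sum.inl ()) + 1)) :=
  rfl

lemma coeff_sumElim_pderiv_inr_genT (t : ℕ → MvPowerSeries β R) (b : β) (k : ℕ)
    (n : β →₀ ℕ) :
    coeff (Finsupp.sumElim (Finsupp.single () k) n) (pderiv R (Sum.inr b) (genT t)) =
      -coeff n (pderiv R b (t (k + 1))) := by
  have hshift : Finsupp.sumElim (Finsupp.single () k) n + Finsupp.single (Sum.inr b) 1 =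
      Finsupp.sumElim (Finsupp.single () k) (n + Finsupp.single b 1) := by
    ext (_ | _) <;> simp [Finsupp.single_apply]
  have hne : Finsupp.sumElim (Finsupp.single () k) (n + Finsupp.single b 1) ≠ 0 :=
    Finsupp.ne_iff.mpr ⟨Sum.inr b, by simp⟩
  rw [coeff_pderiv, coeff_pderiv, hshift, coeff_genT, if_neg hne, res, Finsupp.comapDomain_inr_sumElim]
  simp

lemma coeff_sumElim_succ_X_inl_mul (f : MvPowerSeries (Unit ⊕ β) R) (k : ℕ) (n : β →₀ ℕ) :
    coeff (Finsupp.sumElim (Finsupp.single () (k + 1)) n) (X (Sum.inl ()) * f) =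
      coeff (Finsupp.sumElim (Finsupp.single () k) n) f := by
  have hsplit : Finsupp.sumElim (Finsupp.single () (k + 1)) n =
      Finsupp.single (Sum.inl ()) 1 + Finsupp.sumElim (Finsupp.single () k) n := by
    ext (_ | _) <;> simp [add_comm]
  rw [hsplit, X, coeff_add_monomial_mul, one_mul]

lemma pderiv_eq_of_pderiv_inr_genT_eq_X_mul {t : ℕ → MvPowerSeries β R} {i j : β}
    (h : pderiv R (Sum.inr j) (genT t) = X (Sum.inl ()) * pderiv R (Sum.inr i) (genT t))
    (k : ℕ) : pderiv R i (t (k + 1)) = pderiv R j (t (k + 2)) := by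
  ext n
  -- compare the coefficients of `θ^(k+1) s^n`
  have hcoeff := congrArg (coeff (Finsupp.sumElim (Finsupp.single () (k + 1)) n)) h
  rw [coeff_sumElim_succ_X_inl_mul, coeff_sumElim_pderiv_inr_genT,
    coeff_sumElim_pderiv_inr_genT] at hcoeff
  exact (neg_injective hcoeff).symm

end GeneratingSeries

lemma coeff_expArg (M : (Unit ⊕ ℕ) →₀ ℕ) :
    coeff M expArg = ∑ᶠ a : ℕ,
      if M = Finsupp.single (Sum.inl ()) a + Finsupp.single (Sum.inr a) 1 then (-1 : ℚ) else 0 :=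
  rfl

lemma constantCoeff_expArg : constantCoeff expArg = 0 := by
  rw [← coeff_zero_eq_constantCoeff_apply, coeff_expArg]
  refine finsum_eq_zero_of_forall_eq_zero fun a => if_neg fun h => ?_
  simpa using DFunLike.congr_fun h (Sum.inr a)

lemma add_single_inr_eq_single_add_single_iff (M : (Unit ⊕ ℕ) →₀ ℕ) (a b : ℕ) :
    M + Finsupp.single (Sum.inr b) 1 =
        Finsupp.single (Sum.inl ()) a + Finsupp.single (Sum.inr a) 1 ↔
      a = b ∧ M = Finsupp.single (Sum.inl ()) b := by
  constructor
  · intro h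
    have hab : a = b := by
      by_contra hab
      simpa [Finsupp.single_apply, Ne.symm hab] using DFunLike.congr_fun h (Sum.inr b)
    subst hab
    exact ⟨rfl, add_right_cancel h⟩
  · rintro ⟨rfl, rfl⟩
    rfl

lemma pderiv_inr_expArg (b : ℕ) : pderiv ℚ (Sum.inr b) expArg = -X (Sum.inl ()) ^ b := by
  ext M
  simp only [coeff_pderiv, coeff_expArg, add_single_inr_eq_single_add_single_iff, ite_and]
  rw [finsum_eq_single _ b fun a ha => if_neg ha, if_pos rfl, X_pow_eq, map_neg, coeff_monomial]
  split_ifs with hM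
  · simp [hM]
  · simp

lemma pderiv_inr_fexp_expArg_succ (b : ℕ) :
    pderiv ℚ (Sum.inr (b + 1)) (fexp expArg) =
      X (Sum.inl ()) * pderiv ℚ (Sum.inr b) (fexp expArg) := by
  rw [pderiv_fexp _ constantCoeff_expArg, pderiv_fexp _ constantCoeff_expArg, pderiv_inr_expArg,
    pderiv_inr_expArg, pow_succ']
  ring

theorem stmt2 (t : ℕ → MvPowerSeries ℕ ℚ) (ht : DefIdent t) (a d : ℕ)
    (ha : 1 ≤ a) (hd : a + 1 ≤ d) :
    pd (a - 1) (t d) = pd a (t (d + 1)) := by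
  obtain ⟨b, rfl⟩ : ∃ b, a = b + 1 := ⟨a - 1, by omega⟩
  obtain ⟨k, rfl⟩ : ∃ k, d = k + 1 := ⟨d - 1, by omega⟩
  rw [Nat.add_sub_cancel, pd_eq_pderiv, pd_eq_pderiv]
  refine pderiv_eq_of_pderiv_inr_genT_eq_X_mul ?_ k
  rw [show genT t = fexp expArg from ht]
  exact pderiv_inr_fexp_expArg_succ b
end
end

section
/- Let K(t_1, t_2, ...; s_0, s_1, ...) be a formal power series over Q satisfying, for every a ≥ 0, the differential equation ∂K/∂s_a = - Σ_{i≥1} t̃_i ∂K/∂t_{i+a}, where t̃_i = t_i for i ≠ 1 and t̃_1 = t_1 - 1. Let t(s) be defined by 1 - Σ_{d≥1} θ^{d-1} t_d(s) = exp(-Σ_{a≥0} θ^a s_a). Then for any fixed s_0-tuple of formal variables, the composite K(t(s_0 + s), -s) is independent of s, i.e. all its partial derivatives ∂/∂s_a vanish. -/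
noncomputable section
open MvPowerSeries
open scoped Classical

/-- substitution of the family `u` into the formal power series `F` -/
def subst {σ τ : Type*} (F : MvPowerSeries σ ℚ) (u : σ → MvPowerSeries τ ℚ) :
    MvPowerSeries τ ℚ :=
  fun m => ∑ᶠ n : σ →₀ ℕ,
    MvPowerSeries.coeff n F * MvPowerSeries.coeff m (n.prod fun i k => u i ^ k)

/-- In the ring of `K`, variable `Sum.inl j` denotes `t_{j+1}` and `Sum.inr a` denotes
`s_a`.  `ttil j` is the series `t̃_{j+1} = t_{j+1} - δ_{j+1,1}`. -/
def ttil (j : ℕ) : MvPowerSeries (ℕ ⊕ ℕ) ℚ :=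
  MvPowerSeries.X (Sum.inl j) - (if j = 0 then 1 else 0)

/-- The system of PDEs `∂K/∂s_a = -∑_{i ≥ 1} t̃_i ∂K/∂t_{i+a}` (with `i = j+1`). -/
def Recursion (K : MvPowerSeries (ℕ ⊕ ℕ) ℚ) : Prop :=
  ∀ a : ℕ, pd (Sum.inr a) K =
    (fun m => -∑ᶠ j : ℕ,
      MvPowerSeries.coeff m (ttil j * pd (Sum.inl (j + a)) K) : MvPowerSeries (ℕ ⊕ ℕ) ℚ)

/-! ### Auxiliary library -/

section Aux

open Finsupp Finset

local notation "C" => MvPowerSeries.coeff (R := ℚ)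

variable {σ τ : Type*}

lemma coeff_apply' (f : MvPowerSeries σ ℚ) (m : σ →₀ ℕ) : C m f = f m := rfl

lemma coeff_pd (i : σ) (f : MvPowerSeries σ ℚ) (m : σ →₀ ℕ) :
    C m (pd i f) = ((m i + 1 : ℕ) : ℚ) * C (m + Finsupp.single i 1) f := rfl

/-! #### mdeg -/

lemma mdeg_add (a b : σ →₀ ℕ) : mdeg (a + b) = mdeg a + mdeg b :=
  Finsupp.sum_add_index' (fun _ => rfl) (fun _ _ _ => rfl)

lemma mdeg_single (i : σ) (k : ℕ) : mdeg (Finsupp.single i k) = k :=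
  Finsupp.sum_single_index rfl

@[simp] lemma mdeg_zero : mdeg (0 : σ →₀ ℕ) = 0 := rfl

lemma fs_single_apply (v i : σ) (k : ℕ) : Finsupp.single v k i = if i = v then k else 0 := by
  rcases eq_or_ne i v with rfl | h
  · simp
  · simp [Finsupp.single_eq_of_ne' (Ne.symm h), h]

lemma apply_le_mdeg (m : σ →₀ ℕ) (i : σ) : m i ≤ mdeg m := by
  rw [mdeg, Finsupp.sum]
  by_cases h : i ∈ m.support
  · exact Finset.single_le_sum (f := fun j => m j) (fun _ _ => Nat.zero_le _) h
  · simp [Finsupp.notMem_support_iff.mp h]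

lemma mdeg_eq_zero {m : σ →₀ ℕ} (h : mdeg m = 0) : m = 0 := by
  ext i
  have := apply_le_mdeg m i
  simp only [Finsupp.coe_zero, Pi.zero_apply]
  omega

/-! #### finsum helpers -/

lemma finsum_eq_sum_st {M : Type*} [AddCommMonoid M] {f : α → M} {s : Finset α}
    (h : ∀ a, f a ≠ 0 → a ∈ s) : ∑ᶠ a, f a = ∑ a ∈ s, f a :=
  finsum_eq_sum_of_support_subset _ (fun a ha => h a ha)

lemma finsum_double {α β : Type*} {M : Type*} [AddCommMonoid M] (f : α → β → M)
    (A : Finset α) (B : Finset β) (h : ∀ a b, f a b ≠ 0 → a ∈ A ∧ b ∈ B) :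
    ∑ᶠ a, ∑ᶠ b, f a b = ∑ a ∈ A, ∑ b ∈ B, f a b := by
  have h1 : ∀ a, (∑ᶠ b, f a b) = ∑ b ∈ B, f a b := fun a =>
    finsum_eq_sum_st (fun b hb => (h a b hb).2)
  rw [finsum_eq_sum_st (s := A) (fun a ha => ?_)]
  · exact Finset.sum_congr rfl fun a _ => h1 a
  · by_contra hA
    apply ha
    rw [h1 a]
    exact Finset.sum_eq_zero fun b _ => by
      by_contra hb; exact hA (h a b hb).1

lemma finsum_shift {M : Type*} [AddCommMonoid M] {α β : Type*} (g : α → β)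
    (hg : Function.Injective g) (f : β → M) (h : ∀ b, b ∉ Set.range g → f b = 0) :
    ∑ᶠ b, f b = ∑ᶠ a, f (g a) := by
  rw [← finsum_mem_univ f, ← finsum_mem_range hg]
  have : Function.support f ⊆ Set.range g := fun b hb => by
    by_contra hr; exact hb (h b hr)
  rw [← finsum_mem_inter_support f Set.univ, ← finsum_mem_inter_support f (Set.range g),
    Set.univ_inter, Set.inter_eq_self_of_subset_right this]

/-! #### sum over support bijection -/

lemma sum_bij_support {α β : Type*} {M : Type*} [AddCommMonoid M]
    {A : Finset α} {B : Finset β} {f : α → M} {g : β → M} (i : α → β) (j : β → α)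
    (hAB : ∀ a ∈ A, f a ≠ 0 → i a ∈ B ∧ g (i a) = f a ∧ j (i a) = a)
    (hBA : ∀ b ∈ B, g b ≠ 0 → j b ∈ A ∧ f (j b) = g b ∧ i (j b) = b) :
    ∑ a ∈ A, f a = ∑ b ∈ B, g b := by
  classical
  rw [← Finset.sum_filter_of_ne (p := fun a => f a ≠ 0) (fun x _ h => h),
      ← Finset.sum_filter_of_ne (s := B) (p := fun b => g b ≠ 0) (fun x _ h => h)]
  refine Finset.sum_bij' (fun a _ => i a) (fun b _ => j b) ?_ ?_ ?_ ?_ ?_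
  · intro a ha
    rw [Finset.mem_filter] at ha ⊢
    obtain ⟨h1, h2, _⟩ := hAB a ha.1 ha.2
    exact ⟨h1, h2 ▸ ha.2⟩
  · intro b hb
    rw [Finset.mem_filter] at hb ⊢
    obtain ⟨h1, h2, _⟩ := hBA b hb.1 hb.2
    exact ⟨h1, h2 ▸ hb.2⟩
  · intro a ha
    rw [Finset.mem_filter] at ha
    exact (hAB a ha.1 ha.2).2.2
  · intro b hb
    rw [Finset.mem_filter] at hb
    exact (hBA b hb.1 hb.2).2.2
  · intro a ha
    rw [Finset.mem_filter] at ha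
    exact ((hAB a ha.1 ha.2).2.1).symm

/-! #### Finsupp pointwise helpers -/

lemma fs_sub_add {m : σ →₀ ℕ} {v : σ} (h : m v ≠ 0) :
    m - Finsupp.single v 1 + Finsupp.single v 1 = m := by
  ext i; simp only [Finsupp.add_apply, Finsupp.tsub_apply, fs_single_apply]
  split_ifs with hi
  · subst hi; omega
  · omega

lemma fs_add_sub (m : σ →₀ ℕ) (v : σ) :
    m + Finsupp.single v 1 - Finsupp.single v 1 = m := by
  ext i; simp only [Finsupp.add_apply, Finsupp.tsub_apply, fs_single_apply]
  split_ifs <;> omega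

lemma fs_sub_apply {m : σ →₀ ℕ} {v : σ} (h : m v ≠ 0) :
    (m - Finsupp.single v 1 : σ →₀ ℕ) v + 1 = m v := by
  have h1 : (Finsupp.single v 1 : σ →₀ ℕ) v = 1 := Finsupp.single_eq_same
  simp only [Finsupp.tsub_apply, h1]
  omega

lemma fs_antidiag_shift {m p q : σ →₀ ℕ} {v : σ} (hpq : p + q = m + Finsupp.single v 1)
    (hp : p v ≠ 0) : (p - Finsupp.single v 1) + q = m := by
  ext i
  have h2 := DFunLike.congr_fun hpq i
  rcases eq_or_ne i v with rfl | hi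
  · simp only [Finsupp.add_apply, Finsupp.tsub_apply, Finsupp.single_eq_same] at *
    omega
  · simp only [Finsupp.add_apply, Finsupp.tsub_apply,
      Finsupp.single_eq_of_ne' (Ne.symm hi)] at *
    omega

lemma fs_add_ne_zero (m : σ →₀ ℕ) (v : σ) : m + Finsupp.single v 1 ≠ 0 := by
  intro h
  have h2 := DFunLike.congr_fun h v
  have h1 : (Finsupp.single v 1 : σ →₀ ℕ) v = 1 := Finsupp.single_eq_same
  simp only [Finsupp.add_apply, h1, Finsupp.coe_zero, Pi.zero_apply] at h2
  omega

/-! #### finiteness of bounded monomial sets -/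

lemma finite_bounded (S : Finset σ) (D : ℕ) :
    {n : σ →₀ ℕ | ↑n.support ⊆ (S : Set σ) ∧ mdeg n ≤ D}.Finite := by
  classical
  apply Set.Finite.of_finite_image (f := fun n => fun i : S => min (n i) D)
  · have hsub : ((fun n : σ →₀ ℕ => fun i : S => min (n i) D) ''
        {n : σ →₀ ℕ | ↑n.support ⊆ (S : Set σ) ∧ mdeg n ≤ D}) ⊆
        Set.range (fun g : S → Fin (D + 1) => fun i => (g i : ℕ)) := by
      rintro _ ⟨n, _, rfl⟩
      exact ⟨fun i => ⟨min (n i) D, by omega⟩, rfl⟩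
    exact (Set.finite_range _).subset hsub
  · intro n hn n' hn' h
    ext i
    by_cases hi : i ∈ S
    · have h1 := congrFun h ⟨i, hi⟩
      simp only at h1
      have b1 : n i ≤ D := le_trans (apply_le_mdeg n i) hn.2
      have b2 : n' i ≤ D := le_trans (apply_le_mdeg n' i) hn'.2
      omega
    · have e1 : n i = 0 := by
        by_contra h0
        exact hi (hn.1 (Finsupp.mem_support_iff.mpr h0))
      have e2 : n' i = 0 := by
        by_contra h0
        exact hi (hn'.1 (Finsupp.mem_support_iff.mpr h0))
      rw [e1, e2]

end Aux
section Aux2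

open Finsupp Finset

local notation "C" => MvPowerSeries.coeff (R := ℚ)

variable {σ τ : Type*}

/-! #### Leibniz rule -/

lemma pd_one (v : σ) : pd v (1 : MvPowerSeries σ ℚ) = 0 := by
  funext m
  show ((m v + 1 : ℕ) : ℚ) * C (m + Finsupp.single v 1) 1 = 0
  rw [MvPowerSeries.coeff_one, if_neg (fs_add_ne_zero m v), mul_zero]

lemma pd_mul (v : σ) (f g : MvPowerSeries σ ℚ) :
    pd v (f * g) = pd v f * g + f * pd v g := by
  funext m
  show ((m v + 1 : ℕ) : ℚ) * C (m + Finsupp.single v 1) (f * g) = _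
  have rhs : (pd v f * g + f * pd v g) m =
      (∑ p ∈ antidiagonal m, ((p.1 v + 1 : ℕ) : ℚ) *
        C (p.1 + Finsupp.single v 1) f * C p.2 g) +
      (∑ p ∈ antidiagonal m, C p.1 f * (((p.2 v + 1 : ℕ) : ℚ) *
        C (p.2 + Finsupp.single v 1) g)) := by
    show C m (pd v f * g) + C m (f * pd v g) = _
    rw [MvPowerSeries.coeff_mul, MvPowerSeries.coeff_mul]
    rfl
  rw [rhs, MvPowerSeries.coeff_mul, Finset.mul_sum]
  have split : ∀ p ∈ antidiagonal (m + Finsupp.single v 1),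
      ((m v + 1 : ℕ) : ℚ) * (C p.1 f * C p.2 g) =
      ((p.1 v : ℕ) : ℚ) * (C p.1 f * C p.2 g) +
      ((p.2 v : ℕ) : ℚ) * (C p.1 f * C p.2 g) := by
    intro p hp
    rw [Finset.HasAntidiagonal.mem_antidiagonal] at hp
    have h1 : p.1 v + p.2 v = m v + 1 := by
      have h2 := DFunLike.congr_fun hp v
      simpa [Finsupp.add_apply, Finsupp.single_eq_same] using h2
    have : ((p.1 v : ℕ) : ℚ) + ((p.2 v : ℕ) : ℚ) = ((m v + 1 : ℕ) : ℚ) := by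
      rw [← Nat.cast_add, h1]
    rw [← add_mul, this]
  rw [Finset.sum_congr rfl split, Finset.sum_add_distrib]
  congr 1
  · -- first piece: shift in the first coordinate
    refine sum_bij_support (fun p => (p.1 - Finsupp.single v 1, p.2))
      (fun q => (q.1 + Finsupp.single v 1, q.2)) ?_ ?_
    · rintro ⟨p1, p2⟩ hp hne
      rw [Finset.HasAntidiagonal.mem_antidiagonal] at hp
      have hp1 : p1 v ≠ 0 := by
        intro h0; rw [h0] at hne; simp at hne
      refine ⟨?_, ?_, ?_⟩
      · rw [Finset.HasAntidiagonal.mem_antidiagonal]; exact fs_antidiag_shift hp hp1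
      · simp only
        rw [fs_sub_add hp1, fs_sub_apply hp1]
        ring
      · simp only [Prod.mk.injEq]
        exact ⟨fs_sub_add hp1, trivial⟩
    · rintro ⟨q1, q2⟩ hq hne
      rw [Finset.HasAntidiagonal.mem_antidiagonal] at hq
      have hv : (q1 + Finsupp.single v 1 : σ →₀ ℕ) v = q1 v + 1 := by
        simp [Finsupp.add_apply, Finsupp.single_eq_same]
      refine ⟨?_, ?_, ?_⟩
      · rw [Finset.HasAntidiagonal.mem_antidiagonal]
        rw [← hq]; ext i
        simp only [Finsupp.add_apply]; omega
      · simp only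
        rw [hv]
        ring
      · simp only [Prod.mk.injEq]
        exact ⟨fs_add_sub q1 v, trivial⟩
  · -- second piece: shift in the second coordinate
    refine sum_bij_support (fun p => (p.1, p.2 - Finsupp.single v 1))
      (fun q => (q.1, q.2 + Finsupp.single v 1)) ?_ ?_
    · rintro ⟨p1, p2⟩ hp hne
      rw [Finset.HasAntidiagonal.mem_antidiagonal] at hp
      have hp2 : p2 v ≠ 0 := by
        intro h0; rw [h0] at hne; simp at hne
      have hp' : p2 + p1 = m + Finsupp.single v 1 := by rw [add_comm p2 p1]; exact hp
      refine ⟨?_, ?_, ?_⟩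
      · rw [Finset.HasAntidiagonal.mem_antidiagonal, add_comm]
        exact fs_antidiag_shift hp' hp2
      · simp only
        rw [fs_sub_add hp2, fs_sub_apply hp2]
        ring
      · simp only [Prod.mk.injEq]
        exact ⟨trivial, fs_sub_add hp2⟩
    · rintro ⟨q1, q2⟩ hq hne
      rw [Finset.HasAntidiagonal.mem_antidiagonal] at hq
      have hv : (q2 + Finsupp.single v 1 : σ →₀ ℕ) v = q2 v + 1 := by
        simp [Finsupp.add_apply, Finsupp.single_eq_same]
      refine ⟨?_, ?_, ?_⟩
      · rw [Finset.HasAntidiagonal.mem_antidiagonal]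
        rw [← hq]; ext i
        simp only [Finsupp.add_apply]; omega
      · simp only
        rw [hv]
        ring
      · simp only [Prod.mk.injEq]
        exact ⟨trivial, fs_add_sub q2 v⟩

lemma pd_pow (v : σ) (f : MvPowerSeries σ ℚ) (k : ℕ) :
    pd v (f ^ (k + 1)) = (k + 1 : ℚ) • (f ^ k * pd v f) := by
  induction k with
  | zero => simp [pd_mul, pd_one]
  | succ k ih =>
    rw [pow_succ (n := k + 1), pd_mul, ih, smul_mul_assoc,
      show f ^ k * pd v f * f = f ^ (k + 1) * pd v f by ring]
    push_cast
    module

/-! #### order bounds -/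

def OrdGe (p : ℕ) (f : MvPowerSeries σ ℚ) : Prop := ∀ m, mdeg m < p → C m f = 0

lemma OrdGe_mul {p q : ℕ} {f g : MvPowerSeries σ ℚ} (hf : OrdGe p f) (hg : OrdGe q g) :
    OrdGe (p + q) (f * g) := by
  intro m hm
  rw [MvPowerSeries.coeff_mul]
  refine Finset.sum_eq_zero fun x hx => ?_
  rw [Finset.HasAntidiagonal.mem_antidiagonal] at hx
  have : mdeg x.1 + mdeg x.2 < p + q := by rw [← mdeg_add, hx]; exact hm
  rcases lt_or_ge (mdeg x.1) p with h | h
  · rw [hf x.1 h, zero_mul]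
  · rw [hg x.2 (by omega), mul_zero]

lemma OrdGe_pow {f : MvPowerSeries σ ℚ} (hf : OrdGe 1 f) (k : ℕ) : OrdGe k (f ^ k) := by
  induction k with
  | zero => intro m hm; omega
  | succ k ih =>
    rw [pow_succ]
    have := OrdGe_mul ih hf
    exact this

lemma OrdGe_P {u : σ → MvPowerSeries τ ℚ} (hu : ∀ i, OrdGe 1 (u i)) (n : σ →₀ ℕ) :
    OrdGe (mdeg n) (n.prod fun i k => u i ^ k) := by
  induction n using Finsupp.induction with
  | zero =>
    intro m hm
    simp only [mdeg_zero] at hm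
    omega
  | single_add a k n ha hk ih =>
    rw [Finsupp.prod_add_index' (h := fun i k => u i ^ k) (fun i => pow_zero (u i))
        (fun i k l => pow_add (u i) k l),
      Finsupp.prod_single_index (h := fun i k => u i ^ k) (pow_zero (u a)),
      mdeg_add, mdeg_single]
    exact OrdGe_mul (OrdGe_pow (hu a) k) ih

/-! #### weighted homogeneity -/

def mwt (w : σ → ℤ) (m : σ →₀ ℕ) : ℤ := m.sum fun i k => (k : ℤ) * w i

lemma mwt_add (w : σ → ℤ) (a b : σ →₀ ℕ) : mwt w (a + b) = mwt w a + mwt w b :=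
  Finsupp.sum_add_index' (fun i => by simp) (fun i k l => by push_cast; ring)

lemma mwt_single (w : σ → ℤ) (i : σ) (k : ℕ) : mwt w (Finsupp.single i k) = (k : ℤ) * w i :=
  Finsupp.sum_single_index (by simp)

@[simp] lemma mwt_zero (w : σ → ℤ) : mwt w 0 = 0 := rfl

def Homog (w : σ → ℤ) (c : ℤ) (f : MvPowerSeries σ ℚ) : Prop :=
  ∀ m, C m f ≠ 0 → mwt w m = c

lemma Homog_one (w : σ → ℤ) : Homog w 0 (1 : MvPowerSeries σ ℚ) := by
  intro m hm
  rw [MvPowerSeries.coeff_one] at hm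
  split_ifs at hm with h
  · rw [h]; simp
  · exact absurd rfl hm

lemma Homog_mul {w : σ → ℤ} {c d : ℤ} {f g : MvPowerSeries σ ℚ}
    (hf : Homog w c f) (hg : Homog w d g) : Homog w (c + d) (f * g) := by
  intro m hm
  rw [MvPowerSeries.coeff_mul] at hm
  obtain ⟨x, hx, hne⟩ := Finset.exists_ne_zero_of_sum_ne_zero hm
  rw [Finset.HasAntidiagonal.mem_antidiagonal] at hx
  rw [← hx, mwt_add, hf x.1 (left_ne_zero_of_mul hne), hg x.2 (right_ne_zero_of_mul hne)]

lemma Homog_pow {w : σ → ℤ} {c : ℤ} {f : MvPowerSeries σ ℚ} (hf : Homog w c f) (k : ℕ) :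
    Homog w (k * c) (f ^ k) := by
  induction k with
  | zero => rw [pow_zero]; simpa using Homog_one w
  | succ k ih =>
    rw [pow_succ]
    have := Homog_mul ih hf
    rw [show ((k : ℤ) * c + c) = ((k : ℕ) + 1 : ℤ) * c by ring] at this
    simpa using this

lemma Homog_P {w : σ → ℤ} {W : τ → ℤ} {u : σ → MvPowerSeries τ ℚ}
    (hu : ∀ i, Homog W (w i) (u i)) (n : σ →₀ ℕ) :
    Homog W (mwt w n) (n.prod fun i k => u i ^ k) := by
  induction n using Finsupp.induction with
  | zero => simpa using Homog_one W
  | single_add a k n ha hk ih =>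
    rw [Finsupp.prod_add_index' (h := fun i k => u i ^ k) (fun i => pow_zero (u i))
        (fun i k l => pow_add (u i) k l),
      Finsupp.prod_single_index (h := fun i k => u i ^ k) (pow_zero (u a)),
      mwt_add, mwt_single]
    exact Homog_mul (by simpa using Homog_pow (hu a) k) ih

end Aux2
section Aux3

open Finsupp Finset

local notation "C" => MvPowerSeries.coeff (R := ℚ)

variable {σ τ : Type*}

/-- the product of powers of the substituted series -/
def Pn (u : σ → MvPowerSeries τ ℚ) (n : σ →₀ ℕ) : MvPowerSeries τ ℚ :=
  n.prod fun i k => u i ^ k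

/-- good substitution families -/
structure Good (u : σ → MvPowerSeries τ ℚ) : Prop where
  ord : ∀ i, OrdGe 1 (u i)
  fin : ∀ m, {n : σ →₀ ℕ | C m (Pn u n) ≠ 0}.Finite

variable {u : σ → MvPowerSeries τ ℚ}

lemma Pn_zero : Pn u 0 = 1 := Finsupp.prod_zero_index

lemma Pn_add (n1 n2 : σ →₀ ℕ) : Pn u (n1 + n2) = Pn u n1 * Pn u n2 :=
  Finsupp.prod_add_index' (h := fun i k => u i ^ k) (fun i => pow_zero (u i))
    (fun i k l => pow_add (u i) k l)

lemma Pn_single (c : σ) : Pn u (Finsupp.single c 1) = u c := by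
  rw [Pn, Finsupp.prod_single_index (h := fun i k => u i ^ k) (pow_zero (u c)), pow_one]

/-- the finite support set of the substitution -/
def Nfin (hu : Good u) (m : τ →₀ ℕ) : Finset (σ →₀ ℕ) := (hu.fin m).toFinset

lemma mem_Nfin {hu : Good u} {m : τ →₀ ℕ} {n : σ →₀ ℕ} :
    n ∈ Nfin hu m ↔ C m (Pn u n) ≠ 0 := Set.Finite.mem_toFinset _

/-- finite support sets adapted to products -/
def NSf (hu : Good u) (m : τ →₀ ℕ) : Finset (σ →₀ ℕ) :=
  (antidiagonal m).biUnion fun p => Nfin hu p.1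

lemma mem_NSf {hu : Good u} {m : τ →₀ ℕ} {n : σ →₀ ℕ} {p : (τ →₀ ℕ) × (τ →₀ ℕ)}
    (hp : p ∈ antidiagonal m) (h : C p.1 (Pn u n) ≠ 0) : n ∈ NSf hu m :=
  Finset.mem_biUnion.mpr ⟨p, hp, mem_Nfin.mpr h⟩

lemma coeff_subst_eq (hu : Good u) (F : MvPowerSeries σ ℚ) (m : τ →₀ ℕ)
    {N : Finset (σ →₀ ℕ)} (hN : ∀ n, C m (Pn u n) ≠ 0 → n ∈ N) :
    C m (subst F u) = ∑ n ∈ N, C n F * C m (Pn u n) := by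
  show ∑ᶠ n, C n F * C m (Pn u n) = _
  exact finsum_eq_sum_st fun n hn => hN n fun h0 => hn (by rw [h0, mul_zero])

lemma coeff_subst (hu : Good u) (F : MvPowerSeries σ ℚ) (m : τ →₀ ℕ) :
    C m (subst F u) = ∑ n ∈ Nfin hu m, C n F * C m (Pn u n) :=
  coeff_subst_eq hu F m fun n h => mem_Nfin.mpr h

lemma coeff_subst_mul (hu : Good u) (F : MvPowerSeries σ ℚ) (h : MvPowerSeries τ ℚ)
    (m : τ →₀ ℕ) :
    C m (subst F u * h) = ∑ n ∈ NSf hu m, C n F * C m (Pn u n * h) := by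
  rw [MvPowerSeries.coeff_mul]
  have step : ∀ p ∈ antidiagonal m, C p.1 (subst F u) * C p.2 h =
      ∑ n ∈ NSf hu m, C n F * (C p.1 (Pn u n) * C p.2 h) := by
    intro p hp
    rw [coeff_subst_eq hu F p.1 (fun n hn => mem_NSf (hu := hu) hp hn), Finset.sum_mul]
    exact Finset.sum_congr rfl fun n _ => by ring
  rw [Finset.sum_congr rfl step, Finset.sum_comm]
  refine Finset.sum_congr rfl fun n _ => ?_
  rw [← Finset.mul_sum, MvPowerSeries.coeff_mul]

lemma subst_one (hu : Good u) : subst 1 u = 1 := by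
  funext m
  show ∑ᶠ n, C n 1 * C m (Pn u n) = (1 : MvPowerSeries τ ℚ) m
  rw [finsum_eq_single _ 0 ?side]
  case side =>
    intro n hn
    rw [MvPowerSeries.coeff_one, if_neg hn, zero_mul]
  rw [MvPowerSeries.coeff_one, if_pos rfl, one_mul, Pn_zero]
  rfl

lemma subst_sub (hu : Good u) (F G : MvPowerSeries σ ℚ) :
    subst (F - G) u = subst F u - subst G u := by
  funext m
  show C m (subst (F - G) u) = C m (subst F u) - C m (subst G u)
  rw [coeff_subst hu, coeff_subst hu, coeff_subst hu, ← Finset.sum_sub_distrib]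
  refine Finset.sum_congr rfl fun n _ => ?_
  rw [map_sub]
  ring

lemma coeff_X_mul' (c : σ) (D : MvPowerSeries σ ℚ) (n : σ →₀ ℕ) :
    C n (MvPowerSeries.X c * D) =
      if Finsupp.single c 1 ≤ n then C (n - Finsupp.single c 1) D else 0 := by
  have hX : (MvPowerSeries.X c : MvPowerSeries σ ℚ) =
      MvPowerSeries.monomial (Finsupp.single c 1) 1 := by
    rw [← MvPowerSeries.X_pow_eq c 1, pow_one]
  rw [hX, MvPowerSeries.coeff_monomial_mul]
  split_ifs <;> simp

lemma single_le_iff' {c : σ} {n : σ →₀ ℕ} : Finsupp.single c 1 ≤ n ↔ n c ≠ 0 := by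
  rw [Finsupp.single_le_iff]
  omega

lemma subst_X_mul (hu : Good u) (c : σ) (D : MvPowerSeries σ ℚ) :
    subst (MvPowerSeries.X c * D) u = subst D u * u c := by
  funext m
  show C m (subst (MvPowerSeries.X c * D) u) = C m (subst D u * u c)
  rw [coeff_subst hu, coeff_subst_mul hu]
  have lhs_eq : ∀ n ∈ Nfin hu m, C n (MvPowerSeries.X c * D) * C m (Pn u n) =
      (if Finsupp.single c 1 ≤ n then C (n - Finsupp.single c 1) D * C m (Pn u n) else 0) := by
    intro n _
    rw [coeff_X_mul']
    split_ifs <;> ring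
  rw [Finset.sum_congr rfl lhs_eq]
  refine sum_bij_support (fun n => n - Finsupp.single c 1) (fun n' => n' + Finsupp.single c 1)
    ?_ ?_
  · intro n hn hne
    rw [mem_Nfin] at hn
    split_ifs at hne with hc
    · have hc' : n c ≠ 0 := single_le_iff'.mp hc
      have hrt : n - Finsupp.single c 1 + Finsupp.single c 1 = n := fs_sub_add hc'
      have hPn : C m (Pn u ((n - Finsupp.single c 1) + Finsupp.single c 1)) ≠ 0 := by
        rw [hrt]; exact hn
      refine ⟨?_, ?_, hrt⟩
      · -- membership in NSf
        rw [Pn_add, Pn_single, MvPowerSeries.coeff_mul] at hPn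
        obtain ⟨p, hp, hpne⟩ := Finset.exists_ne_zero_of_sum_ne_zero hPn
        exact mem_NSf hp (left_ne_zero_of_mul hpne)
      · rw [← Pn_single (u := u) c, ← Pn_add, hrt, if_pos hc]
    · exact absurd rfl hne
  · intro n' hn' hne
    have hPne : C m (Pn u (n' + Finsupp.single c 1)) ≠ 0 := by
      intro h0
      rw [Pn_add, Pn_single] at h0
      rw [h0, mul_zero] at hne
      exact hne rfl
    refine ⟨mem_Nfin.mpr hPne, ?_, fs_add_sub n' c⟩
    have hle : Finsupp.single c 1 ≤ n' + Finsupp.single c 1 := le_add_self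
    rw [if_pos hle, fs_add_sub, Pn_add, Pn_single]

/-! #### derivative of the formal exponential -/

lemma pd_fexp {w : MvPowerSeries σ ℚ} (hw : OrdGe 1 w) (v : σ) :
    pd v (fexp w) = pd v w * fexp w := by
  funext m
  show ((m v + 1 : ℕ) : ℚ) * C (m + Finsupp.single v 1) (fexp w) = C m (pd v w * fexp w)
  have hmdeg : mdeg (m + Finsupp.single v 1) = mdeg m + 1 := by
    rw [mdeg_add, mdeg_single]
  have hfax : C (m + Finsupp.single v 1) (fexp w) =
      ∑ k ∈ Finset.range (mdeg m + 2), (k.factorial : ℚ)⁻¹ •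
        C (m + Finsupp.single v 1) (w ^ k) := by
    show fexp w (m + Finsupp.single v 1) = _
    rw [fexp, hmdeg]
  rw [hfax, Finset.mul_sum]
  have term_eq : ∀ k, ((m v + 1 : ℕ) : ℚ) * ((k.factorial : ℚ)⁻¹ •
      C (m + Finsupp.single v 1) (w ^ k)) =
      (k.factorial : ℚ)⁻¹ * C m (pd v (w ^ k)) := by
    intro k
    rw [coeff_pd, smul_eq_mul]
    ring
  rw [Finset.sum_congr rfl (fun k _ => term_eq k)]
  rw [Finset.sum_range_succ']
  have h0 : (Nat.factorial 0 : ℚ)⁻¹ * C m (pd v (w ^ 0)) = 0 := by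
    rw [pow_zero, pd_one, map_zero, mul_zero]
  rw [h0, add_zero]
  have term2 : ∀ k, ((k + 1).factorial : ℚ)⁻¹ * C m (pd v (w ^ (k + 1))) =
      (k.factorial : ℚ)⁻¹ * C m (w ^ k * pd v w) := by
    intro k
    rw [pd_pow, map_smul, smul_eq_mul, ← mul_assoc]
    congr 1
    rw [Nat.factorial_succ]
    push_cast
    rw [mul_inv]
    have h1 : ((k : ℚ) + 1) ≠ 0 := by positivity
    field_simp
  rw [Finset.sum_congr rfl (fun k _ => term2 k)]
  -- now the right-hand side
  rw [MvPowerSeries.coeff_mul]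
  have expand : ∀ p ∈ antidiagonal m, C p.1 (pd v w) * C p.2 (fexp w) =
      ∑ k ∈ Finset.range (mdeg m + 1), (k.factorial : ℚ)⁻¹ *
        (C p.1 (pd v w) * C p.2 (w ^ k)) := by
    intro p hp
    rw [Finset.HasAntidiagonal.mem_antidiagonal] at hp
    have hle : mdeg p.2 ≤ mdeg m := by
      rw [← hp, mdeg_add]; omega
    have hfex : C p.2 (fexp w) = ∑ k ∈ Finset.range (mdeg p.2 + 1),
        (k.factorial : ℚ)⁻¹ • C p.2 (w ^ k) := rfl
    rw [hfex]
    rw [← Finset.sum_subset (Finset.range_subset_range.mpr (by omega :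
        mdeg p.2 + 1 ≤ mdeg m + 1)) ?vanish]
    case vanish =>
      intro k _ hk
      rw [Finset.mem_range, not_lt] at hk
      rw [OrdGe_pow hw k p.2 (by omega)]
      simp
    rw [Finset.mul_sum]
    exact Finset.sum_congr rfl fun k _ => by rw [smul_eq_mul]; ring
  rw [Finset.sum_congr rfl expand, Finset.sum_comm]
  refine Finset.sum_congr rfl fun k _ => ?_
  rw [← Finset.mul_sum, ← MvPowerSeries.coeff_mul, mul_comm (w ^ k) (pd v w)]

end Aux3
section Aux4

open Finsupp Finset

local notation "C" => MvPowerSeries.coeff (R := ℚ)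

variable {σ τ : Type*} {u : σ → MvPowerSeries τ ℚ}

/-! #### more Finsupp helpers -/

lemma fs_addsingle_self {a : σ} {n : σ →₀ ℕ} (ha : a ∉ n.support) (k : ℕ) :
    (Finsupp.single a k + n) a = k := by
  rw [Finsupp.add_apply, Finsupp.single_eq_same, Finsupp.notMem_support_iff.mp ha]
  omega

lemma fs_addsingle_ne {a c : σ} (h : c ≠ a) (k : ℕ) (n : σ →₀ ℕ) :
    (Finsupp.single a k + n) c = n c := by
  rw [Finsupp.add_apply, Finsupp.single_eq_of_ne' (Ne.symm h), zero_add]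

lemma fs_addsingle_sub_self {a : σ} {k : ℕ} (hk : k ≠ 0) (n : σ →₀ ℕ) :
    Finsupp.single a k + n - Finsupp.single a 1 = Finsupp.single a (k - 1) + n := by
  ext i
  rcases eq_or_ne i a with rfl | hi
  · simp only [Finsupp.add_apply, Finsupp.tsub_apply, Finsupp.single_eq_same]
    omega
  · simp only [Finsupp.add_apply, Finsupp.tsub_apply,
      Finsupp.single_eq_of_ne' (Ne.symm hi)]
    omega

lemma fs_addsingle_sub_ne {a c : σ} (h : c ≠ a) (k : ℕ) (n : σ →₀ ℕ) :
    Finsupp.single a k + n - Finsupp.single c 1 =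
      Finsupp.single a k + (n - Finsupp.single c 1) := by
  ext i
  rcases eq_or_ne i a with rfl | hi
  · simp only [Finsupp.add_apply, Finsupp.tsub_apply, Finsupp.single_eq_same,
      Finsupp.single_eq_of_ne' h]
    omega
  · rcases eq_or_ne i c with rfl | hic
    · simp only [Finsupp.add_apply, Finsupp.tsub_apply, Finsupp.single_eq_same,
        Finsupp.single_eq_of_ne' (Ne.symm hi)]
      omega
    · simp only [Finsupp.add_apply, Finsupp.tsub_apply,
        Finsupp.single_eq_of_ne' (Ne.symm hi), Finsupp.single_eq_of_ne' (Ne.symm hic)]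
      omega

lemma Pn_single_pow (c : σ) (k : ℕ) : Pn u (Finsupp.single c k) = u c ^ k :=
  Finsupp.prod_single_index (h := fun i k => u i ^ k) (pow_zero (u c))

/-! #### derivative of a monomial in the `u i` -/

lemma pd_Pn (v : τ) (n : σ →₀ ℕ) :
    pd v (Pn u n) = ∑ c ∈ n.support,
      (n c : ℚ) • (Pn u (n - Finsupp.single c 1) * pd v (u c)) := by
  induction n using Finsupp.induction with
  | zero => rw [Pn_zero, pd_one]; simp
  | single_add a k n ha hk ih =>
    have hsupp : (Finsupp.single a k + n).support = insert a n.support := by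
      rw [Finsupp.support_add_eq, Finsupp.support_single_ne_zero a hk]
      · ext i; simp [Finset.mem_insert]
      · rw [Finsupp.support_single_ne_zero a hk]
        simp only [Finset.disjoint_singleton_left]
        exact ha
    rw [show Pn u (Finsupp.single a k + n) = u a ^ k * Pn u n by
      rw [Pn_add, Pn_single_pow]]
    rw [pd_mul, hsupp, Finset.sum_insert ha]
    obtain ⟨k', rfl⟩ : ∃ k', k = k' + 1 := ⟨k - 1, by omega⟩
    congr 1
    · -- the `a`-term
      rw [fs_addsingle_self ha, fs_addsingle_sub_self hk, pd_pow]
      have : k' + 1 - 1 = k' := by omega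
      rw [this, Pn_add, Pn_single_pow]
      rw [smul_mul_assoc]
      push_cast
      congr 1
      ring
    · -- the other terms
      rw [ih, Finset.mul_sum]
      refine Finset.sum_congr rfl fun c hc => ?_
      have hca : c ≠ a := fun h => ha (h ▸ hc)
      rw [fs_addsingle_ne hca, fs_addsingle_sub_ne hca, Pn_add, Pn_single_pow]
      rw [mul_smul_comm]
      congr 1
      ring

/-! #### finite variable sets -/

lemma Ufin (hu : Good u) (m' : τ →₀ ℕ) : {c : σ | C m' (u c) ≠ 0}.Finite := by
  have hinj : Function.Injective (fun c : σ => Finsupp.single c (1 : ℕ)) :=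
    Finsupp.single_left_injective one_ne_zero
  have hsub : {c : σ | C m' (u c) ≠ 0} ⊆
      (fun c => Finsupp.single c 1) ⁻¹' {n | C m' (Pn u n) ≠ 0} := by
    intro c hc
    simp only [Set.mem_preimage, Set.mem_setOf_eq, Pn_single]
    exact hc
  exact (((hu.fin m').preimage hinj.injOn)).subset hsub

/-- the relevant substitution variables for the chain rule -/
def CSf (hu : Good u) (v : τ) (m : τ →₀ ℕ) : Finset σ :=
  (antidiagonal m).biUnion fun p => (Ufin hu (p.2 + Finsupp.single v 1)).toFinset

lemma mem_CSf {hu : Good u} {v : τ} {m : τ →₀ ℕ} {c : σ} {p : (τ →₀ ℕ) × (τ →₀ ℕ)}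
    (hp : p ∈ antidiagonal m) (h : C (p.2 + Finsupp.single v 1) (u c) ≠ 0) :
    c ∈ CSf hu v m :=
  Finset.mem_biUnion.mpr ⟨p, hp, (Set.Finite.mem_toFinset _).mpr h⟩

lemma not_CSf {hu : Good u} {v : τ} {m : τ →₀ ℕ} {c : σ} (hc : c ∉ CSf hu v m)
    {p : (τ →₀ ℕ) × (τ →₀ ℕ)} (hp : p ∈ antidiagonal m) : C p.2 (pd v (u c)) = 0 := by
  rw [coeff_pd]
  rcases eq_or_ne (C (p.2 + Finsupp.single v 1) (u c)) 0 with h | h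
  · rw [h, mul_zero]
  · exact absurd (mem_CSf hp h) hc

lemma pd_mul_coeff_zero {hu : Good u} {v : τ} {m : τ →₀ ℕ} {c : σ} (hc : c ∉ CSf hu v m)
    (h : MvPowerSeries τ ℚ) : C m (h * pd v (u c)) = 0 := by
  rw [MvPowerSeries.coeff_mul]
  refine Finset.sum_eq_zero fun p hp => ?_
  rw [not_CSf hc hp, mul_zero]

/-! #### the chain rule -/

theorem pd_subst_coeff (hu : Good u) (F : MvPowerSeries σ ℚ) (v : τ) (m : τ →₀ ℕ) :
    C m (pd v (subst F u)) = ∑ᶠ c, C m (subst (pd c F) u * pd v (u c)) := by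
  classical
  -- the right-hand side as a finite sum
  have hRHS : ∑ᶠ c, C m (subst (pd c F) u * pd v (u c)) =
      ∑ c ∈ CSf hu v m, C m (subst (pd c F) u * pd v (u c)) := by
    refine finsum_eq_sum_st fun c hc => ?_
    by_contra hcs
    exact hc (pd_mul_coeff_zero hcs _)
  rw [hRHS]
  -- the left-hand side
  set ev := Finsupp.single v 1 with hev
  set A' : Finset (σ →₀ ℕ) := Nfin hu (m + ev) ∪
    (CSf hu v m).biUnion (fun c => (NSf hu m).image (· + Finsupp.single c 1)) with hA'
  have hL1 : C m (pd v (subst F u)) =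
      ∑ n ∈ A', C n F * C m (pd v (Pn u n)) := by
    rw [coeff_pd, coeff_subst_eq hu F (m + ev)
      (N := A') (fun n hn => Finset.mem_union_left _ (mem_Nfin.mpr hn)), Finset.mul_sum]
    refine Finset.sum_congr rfl fun n _ => ?_
    rw [coeff_pd]
    ring
  rw [hL1]
  -- expand the derivative of the monomial
  have hL2 : ∀ n ∈ A', C n F * C m (pd v (Pn u n)) =
      ∑ c ∈ CSf hu v m, (n c : ℚ) * (C n F * C m (Pn u (n - Finsupp.single c 1) * pd v (u c))) := by
    intro n _
    rw [pd_Pn, map_sum, Finset.mul_sum]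
    have hterm : ∀ c, C n F * C m ((n c : ℚ) • (Pn u (n - Finsupp.single c 1) * pd v (u c))) =
        (n c : ℚ) * (C n F * C m (Pn u (n - Finsupp.single c 1) * pd v (u c))) := by
      intro c
      rw [map_smul, smul_eq_mul]
      ring
    rw [Finset.sum_congr rfl fun c _ => hterm c]
    -- change the index set from `n.support` to `CSf`
    have h1 : n.support ⊆ n.support ∪ CSf hu v m := Finset.subset_union_left
    have h2 : CSf hu v m ⊆ n.support ∪ CSf hu v m := Finset.subset_union_right
    rw [Finset.sum_subset h1
        (fun c _ hc => by rw [Finsupp.notMem_support_iff.mp hc]; push_cast; rw [zero_mul]),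
      ← Finset.sum_subset h2
        (fun c _ hc => by rw [pd_mul_coeff_zero hc, mul_zero, mul_zero])]
  rw [Finset.sum_congr rfl hL2, Finset.sum_comm]
  refine Finset.sum_congr rfl fun c hc => ?_
  -- reindex by adding the single `c`
  have hbij : ∑ n ∈ A', (n c : ℚ) *
        (C n F * C m (Pn u (n - Finsupp.single c 1) * pd v (u c))) =
      ∑ n' ∈ NSf hu m, ((n' c + 1 : ℕ) : ℚ) *
        (C (n' + Finsupp.single c 1) F * C m (Pn u n' * pd v (u c))) := by
    refine sum_bij_support (fun n => n - Finsupp.single c 1)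
      (fun n' => n' + Finsupp.single c 1) ?_ ?_
    · intro n _ hne
      have hnc : n c ≠ 0 := by
        intro h0
        rw [h0] at hne
        push_cast at hne
        rw [zero_mul] at hne
        exact hne rfl
      have hmul : C m (Pn u (n - Finsupp.single c 1) * pd v (u c)) ≠ 0 := by
        intro h0
        rw [h0, mul_zero, mul_zero] at hne
        exact hne rfl
      refine ⟨?_, ?_, fs_sub_add hnc⟩
      · rw [MvPowerSeries.coeff_mul] at hmul
        obtain ⟨p, hp, hpne⟩ := Finset.exists_ne_zero_of_sum_ne_zero hmul
        exact mem_NSf hp (left_ne_zero_of_mul hpne)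
      · rw [fs_sub_add hnc, fs_sub_apply hnc]
    · intro n' hn' hne
      have hv' : (n' + Finsupp.single c 1 : σ →₀ ℕ) c = n' c + 1 := by
        simp [Finsupp.add_apply, Finsupp.single_eq_same]
      refine ⟨?_, ?_, fs_add_sub n' c⟩
      · refine Finset.mem_union_right _ (Finset.mem_biUnion.mpr ⟨c, hc, ?_⟩)
        exact Finset.mem_image.mpr ⟨n', hn', rfl⟩
      · rw [hv', fs_add_sub]
  rw [hbij, coeff_subst_mul hu]
  refine Finset.sum_congr rfl fun n' _ => ?_
  rw [coeff_pd]
  ring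

end Aux4
section Aux5

open Finsupp Finset

local notation "C" => MvPowerSeries.coeff (R := ℚ)

/-- the canonical monomial `θ^e · μ` -/
def Mk (e : ℕ) (μ : ℕ →₀ ℕ) : (Unit ⊕ ℕ) →₀ ℕ :=
  Finsupp.single (Sum.inl ()) e + Finsupp.mapDomain Sum.inr μ

lemma Mk_inl (e : ℕ) (μ : ℕ →₀ ℕ) : Mk e μ (Sum.inl ()) = e := by
  rw [Mk, Finsupp.add_apply, Finsupp.single_eq_same,
    Finsupp.mapDomain_notin_range _ _ (by simp)]
  omega

lemma Mk_inr (e : ℕ) (μ : ℕ →₀ ℕ) (b : ℕ) : Mk e μ (Sum.inr b) = μ b := by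
  rw [Mk, Finsupp.add_apply, Finsupp.single_eq_of_ne' (by simp),
    Finsupp.mapDomain_apply Sum.inr_injective, zero_add]

lemma res_apply {β : Type*} (M : (Unit ⊕ β) →₀ ℕ) (b : β) : res M b = M (Sum.inr b) := rfl

lemma res_Mk (e : ℕ) (μ : ℕ →₀ ℕ) : res (Mk e μ) = μ := by
  ext b; rw [res_apply, Mk_inr]

lemma Mk_eq_zero {e : ℕ} {μ : ℕ →₀ ℕ} : Mk e μ = 0 ↔ e = 0 ∧ μ = 0 := by
  constructor
  · intro h
    constructor
    · have := DFunLike.congr_fun h (Sum.inl ())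
      rwa [Mk_inl] at this
    · ext b
      have := DFunLike.congr_fun h (Sum.inr b)
      rwa [Mk_inr] at this
  · rintro ⟨rfl, rfl⟩
    rw [Mk]
    simp

lemma Mk_add_inr (e a : ℕ) (μ : ℕ →₀ ℕ) :
    Mk e μ + Finsupp.single (Sum.inr a : Unit ⊕ ℕ) 1 = Mk e (μ + Finsupp.single a 1) := by
  rw [Mk, Mk, Finsupp.mapDomain_add, Finsupp.mapDomain_single, add_assoc]

lemma Mk_sub_theta {a e : ℕ} (μ : ℕ →₀ ℕ) :
    Mk e μ - Finsupp.single (Sum.inl () : Unit ⊕ ℕ) a = Mk (e - a) μ := by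
  ext i
  cases i with
  | inl x =>
    cases x
    rw [Finsupp.tsub_apply, Mk_inl, Mk_inl, Finsupp.single_eq_same]
  | inr b =>
    rw [Finsupp.tsub_apply, Mk_inr, Mk_inr, Finsupp.single_eq_of_ne' (by simp)]
    omega

lemma single_theta_le {a e : ℕ} {μ : ℕ →₀ ℕ} :
    Finsupp.single (Sum.inl () : Unit ⊕ ℕ) a ≤ Mk e μ ↔ a ≤ e := by
  rw [Finsupp.single_le_iff, Mk_inl]

lemma mwt_Mk (w1 : ℤ) (w2 : ℕ → ℤ) (e : ℕ) (μ : ℕ →₀ ℕ) :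
    mwt (Sum.elim (fun _ => w1) w2) (Mk e μ) = e * w1 + mwt w2 μ := by
  rw [Mk, mwt_add, mwt_single]
  congr 1
  rw [mwt, mwt, Finsupp.sum_mapDomain_index (by simp) (fun a b c => by push_cast; ring)]
  rfl

/-! #### properties of `expArg` -/

lemma expArg_coeff {M : (Unit ⊕ ℕ) →₀ ℕ} (h : C M expArg ≠ 0) :
    ∃ b : ℕ, M = Finsupp.single (Sum.inl ()) b + Finsupp.single (Sum.inr b) 1 := by
  by_contra hM
  push_neg at hM
  apply h
  show ∑ᶠ a : ℕ, _ = (0 : ℚ)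
  refine finsum_eq_zero_of_forall_eq_zero fun a => ?_
  rw [if_neg (hM a)]

lemma Homog_expArg_theta :
    Homog (Sum.elim (fun _ => (-1 : ℤ)) (fun a : ℕ => (a : ℤ))) 0 expArg := by
  intro M hM
  obtain ⟨b, rfl⟩ := expArg_coeff hM
  rw [mwt_add, mwt_single, mwt_single]
  simp only [Sum.elim_inl, Sum.elim_inr]
  push_cast
  ring

lemma Homog_expArg_s :
    Homog (Sum.elim (fun _ => (0 : ℤ)) (fun _ => (1 : ℤ))) 1 expArg := by
  intro M hM
  obtain ⟨b, rfl⟩ := expArg_coeff hM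
  rw [mwt_add, mwt_single, mwt_single]
  simp only [Sum.elim_inl, Sum.elim_inr]
  push_cast
  ring

lemma OrdGe_expArg : OrdGe 1 expArg := by
  intro M hM
  have hM0 : M = 0 := mdeg_eq_zero (by omega)
  subst hM0
  by_contra h
  obtain ⟨b, hb⟩ := expArg_coeff h
  have := DFunLike.congr_fun hb (Sum.inr b)
  simp only [Finsupp.coe_zero, Pi.zero_apply, Finsupp.add_apply,
    Finsupp.single_eq_same, Finsupp.single_eq_of_ne' (by simp : Sum.inl () ≠ Sum.inr b)] at this
  omega

lemma pd_expArg (a : ℕ) :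
    pd (Sum.inr a) expArg = -(MvPowerSeries.X (Sum.inl ()) ^ a) := by
  funext M
  show ((M (Sum.inr a) + 1 : ℕ) : ℚ) * C (M + Finsupp.single (Sum.inr a) 1) expArg =
    (-(MvPowerSeries.X (Sum.inl ()) ^ a) : MvPowerSeries (Unit ⊕ ℕ) ℚ) M
  have hRHS : (-(MvPowerSeries.X (Sum.inl ()) ^ a) : MvPowerSeries (Unit ⊕ ℕ) ℚ) M =
      -(if M = Finsupp.single (Sum.inl ()) a then (1 : ℚ) else 0) := by
    show C M (-(MvPowerSeries.X (Sum.inl ()) ^ a)) = _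
    rw [map_neg, MvPowerSeries.X_pow_eq, MvPowerSeries.coeff_monomial]
  rw [hRHS]
  set N := M + Finsupp.single (Sum.inr a) 1 with hNdef
  have hNa : N (Sum.inl ()) = M (Sum.inl ()) := by
    rw [hNdef, Finsupp.add_apply, Finsupp.single_eq_of_ne' (by simp), add_zero]
  have hCN : C N expArg = if N = Finsupp.single (Sum.inl ()) (N (Sum.inl ())) +
      Finsupp.single (Sum.inr (N (Sum.inl ()))) 1 then (-1 : ℚ) else 0 := by
    show ∑ᶠ b : ℕ, _ = _
    refine finsum_eq_single _ (N (Sum.inl ())) fun b hb => ?_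
    rw [if_neg]
    intro hEq
    apply hb
    have h1 := DFunLike.congr_fun hEq (Sum.inl ())
    simp only [Finsupp.add_apply, Finsupp.single_eq_same,
      Finsupp.single_eq_of_ne' (show (Sum.inr a : Unit ⊕ ℕ) ≠ Sum.inl () by simp),
      Finsupp.single_eq_of_ne' (show (Sum.inr b : Unit ⊕ ℕ) ≠ Sum.inl () by simp)] at h1
    omega
  rw [hCN]
  rcases eq_or_ne M (Finsupp.single (Sum.inl ()) a) with rfl | hne
  · have hMa : (Finsupp.single (Sum.inl () : Unit ⊕ ℕ) a) (Sum.inl ()) = a :=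
      Finsupp.single_eq_same
    have hMra : (Finsupp.single (Sum.inl () : Unit ⊕ ℕ) a) (Sum.inr a) = 0 :=
      Finsupp.single_eq_of_ne' (by simp)
    rw [if_pos rfl, hNa, hMa, if_pos rfl, hMra]
    norm_num
  · rw [if_neg hne]
    rw [if_neg ?cond, mul_zero, neg_zero]
    case cond =>
      intro hEq
      rcases eq_or_ne (N (Sum.inl ())) a with hba | hba
      · apply hne
        rw [hba] at hEq
        have : M + Finsupp.single (Sum.inr a) 1 =
            Finsupp.single (Sum.inl ()) a + Finsupp.single (Sum.inr a) 1 := hEq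
        exact add_right_cancel this
      · have hNra : N (Sum.inr a) = M (Sum.inr a) + 1 := by
          rw [hNdef, Finsupp.add_apply, Finsupp.single_eq_same]
        have h1 := DFunLike.congr_fun hEq (Sum.inr a)
        rw [hNra] at h1
        simp only [Finsupp.add_apply,
          Finsupp.single_eq_of_ne' (show (Sum.inl () : Unit ⊕ ℕ) ≠ Sum.inr a by simp),
          Finsupp.single_eq_of_ne'
            (show (Sum.inr (N (Sum.inl ())) : Unit ⊕ ℕ) ≠ Sum.inr a by simp [hba])] at h1
        omega

/-! #### properties of `fexp` -/

lemma Homog_fexp {σ : Type*} {w : σ → ℤ} {f : MvPowerSeries σ ℚ} (hf : Homog w 0 f) :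
    Homog w 0 (fexp f) := by
  intro m hm
  have hsum : C m (fexp f) = ∑ k ∈ Finset.range (mdeg m + 1),
      (k.factorial : ℚ)⁻¹ • C m (f ^ k) := rfl
  rw [hsum] at hm
  obtain ⟨k, _, hk⟩ := Finset.exists_ne_zero_of_sum_ne_zero hm
  have hpow : C m (f ^ k) ≠ 0 := fun h0 => hk (by rw [h0, smul_zero])
  have := Homog_pow hf k m hpow
  simpa using this

lemma coeff_fexp_zero : C 0 (fexp expArg) = 1 := by
  have h : C (0 : (Unit ⊕ ℕ) →₀ ℕ) (fexp expArg) = ∑ k ∈ Finset.range (mdeg (0 : (Unit ⊕ ℕ) →₀ ℕ) + 1),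
      (k.factorial : ℚ)⁻¹ • C 0 (expArg ^ k) := rfl
  rw [h]
  simp only [mdeg_zero]
  rw [Finset.sum_range_one, pow_zero, MvPowerSeries.coeff_one, if_pos rfl]
  simp

lemma coeff_fexp_sdeg {M : (Unit ⊕ ℕ) →₀ ℕ} (hM : M ≠ 0)
    (hs : mwt (Sum.elim (fun _ => (0 : ℤ)) (fun _ => (1 : ℤ))) M = 0) :
    C M (fexp expArg) = 0 := by
  have h : C M (fexp expArg) = ∑ k ∈ Finset.range (mdeg M + 1),
      (k.factorial : ℚ)⁻¹ • C M (expArg ^ k) := rfl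
  rw [h]
  refine Finset.sum_eq_zero fun k _ => ?_
  cases k with
  | zero =>
    rw [pow_zero, MvPowerSeries.coeff_one, if_neg hM, smul_zero]
  | succ k =>
    rcases eq_or_ne (C M (expArg ^ (k + 1))) 0 with h0 | h0
    · rw [h0, smul_zero]
    · exfalso
      have := Homog_pow Homog_expArg_s (k + 1) M h0
      rw [hs] at this
      have hcontr : ((k : ℤ) + 1) * 1 = 0 := by push_cast at this ⊢; omega
      omega

/-! #### the coefficients of `t` -/

section Tlem

variable {t : ℕ → MvPowerSeries ℕ ℚ}

lemma coeff_genT_s5 (t : ℕ → MvPowerSeries ℕ ℚ) (e : ℕ) (μ : ℕ →₀ ℕ) :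
    C (Mk e μ) (genT t) = (if e = 0 ∧ μ = 0 then 1 else 0) - C μ (t (e + 1)) := by
  rw [show (C (Mk e μ)) (genT t) = genT t (Mk e μ) from rfl]
  simp only [genT]
  rw [res_Mk, Mk_inl]
  congr 1
  rcases eq_or_ne (Mk e μ) 0 with h | h
  · rw [if_pos h, if_pos (Mk_eq_zero.mp h)]
  · rw [if_neg h, if_neg (fun hc => h (Mk_eq_zero.mpr hc))]

lemma coeff_t (ht : DefIdent t) (e : ℕ) (μ : ℕ →₀ ℕ) :
    C μ (t (e + 1)) = (if e = 0 ∧ μ = 0 then 1 else 0) - C (Mk e μ) (fexp expArg) := by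
  have h := coeff_genT_s5 t e μ
  rw [ht] at h
  linarith [h]

lemma Homog_t (ht : DefIdent t) (e : ℕ) :
    Homog (fun a : ℕ => (a : ℤ)) e (t (e + 1)) := by
  intro μ hμ
  rw [coeff_t ht] at hμ
  by_contra hwne
  have hif : (if e = 0 ∧ μ = 0 then (1 : ℚ) else 0) = 0 := by
    rw [if_neg]
    rintro ⟨rfl, rfl⟩
    exact hwne (by simp)
  have hfx : C (Mk e μ) (fexp expArg) = 0 := by
    by_contra h0
    have := Homog_fexp Homog_expArg_theta (Mk e μ) h0
    rw [mwt_Mk] at this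
    apply hwne
    have : mwt (fun a : ℕ => (a : ℤ)) μ = (e : ℤ) := by linarith
    exact this
  rw [hif, hfx, sub_zero] at hμ
  exact hμ rfl

lemma OrdGe_t (ht : DefIdent t) (e : ℕ) : OrdGe 1 (t (e + 1)) := by
  intro μ hμ
  have hμ0 : μ = 0 := mdeg_eq_zero (by omega)
  subst hμ0
  rw [coeff_t ht]
  rcases Nat.eq_zero_or_pos e with rfl | he
  · rw [if_pos ⟨rfl, rfl⟩]
    have : Mk 0 (0 : ℕ →₀ ℕ) = 0 := Mk_eq_zero.mpr ⟨rfl, rfl⟩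
    rw [this, coeff_fexp_zero]
    ring
  · rw [if_neg (by omega)]
    rw [coeff_fexp_sdeg ?h1 ?h2, sub_zero]
    case h1 =>
      intro h0
      have := (Mk_eq_zero.mp h0).1
      omega
    case h2 =>
      rw [mwt_Mk]
      simp [mwt]

/-- the derivative identity for `t`:  `∂t_{e+1}/∂s_a = -t̃_{e+1-a}` -/
lemma pd_t (ht : DefIdent t) (a e : ℕ) :
    pd a (t (e + 1)) = if a ≤ e then
      -(t (e - a + 1) - (if e - a = 0 then 1 else 0)) else 0 := by
  have hder : pd (Sum.inr a) (genT t) =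
      -(MvPowerSeries.X (Sum.inl ()) ^ a) * genT t := by
    rw [ht, pd_fexp OrdGe_expArg, pd_expArg]
  funext μ
  have hL := congrFun hder (Mk e μ)
  -- compute the LHS of hL
  have hL1 : pd (Sum.inr a) (genT t) (Mk e μ) =
      -(((μ a + 1 : ℕ) : ℚ) * C (μ + Finsupp.single a 1) (t (e + 1))) := by
    show ((Mk e μ (Sum.inr a) + 1 : ℕ) : ℚ) *
        C (Mk e μ + Finsupp.single (Sum.inr a) 1) (genT t) = _
    rw [Mk_inr, Mk_add_inr, coeff_genT_s5]
    have hne : ¬(e = 0 ∧ μ + Finsupp.single a 1 = 0) := by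
      rintro ⟨_, h0⟩
      have := DFunLike.congr_fun h0 a
      simp at this
    rw [if_neg hne]
    ring
  have hL' : (pd (Sum.inr a) (genT t)) (Mk e μ) =
      C (Mk e μ) (-(MvPowerSeries.X (Sum.inl ()) ^ a) * genT t) := hL
  -- compute the RHS of hL
  have hR1 : C (Mk e μ) (-(MvPowerSeries.X (Sum.inl ()) ^ a) * genT t) =
      -(if a ≤ e then ((if e - a = 0 ∧ μ = 0 then (1 : ℚ) else 0) - C μ (t (e - a + 1)))
        else 0) := by
    rw [neg_mul, map_neg, MvPowerSeries.X_pow_eq, MvPowerSeries.coeff_monomial_mul]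
    congr 1
    rcases le_or_gt a e with hae | hae
    · rw [if_pos (single_theta_le.mpr hae), if_pos hae, one_mul, Mk_sub_theta, coeff_genT_s5]
    · rw [if_neg (fun h => by omega : ¬a ≤ e)]
      rw [if_neg (fun h => ?_)]
      have := single_theta_le.mp h
      omega
  -- combine
  have hAB : ((μ a + 1 : ℕ) : ℚ) * C (μ + Finsupp.single a 1) (t (e + 1)) =
      (if a ≤ e then ((if e - a = 0 ∧ μ = 0 then (1 : ℚ) else 0) - C μ (t (e - a + 1)))
        else 0) := by
    have heq : -(((μ a + 1 : ℕ) : ℚ) * C (μ + Finsupp.single a 1) (t (e + 1))) =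
        -(if a ≤ e then ((if e - a = 0 ∧ μ = 0 then (1 : ℚ) else 0) - C μ (t (e - a + 1)))
          else 0) := by
      rw [← hL1, ← hR1]
      exact hL'
    exact neg_injective heq
  show ((μ a + 1 : ℕ) : ℚ) * C (μ + Finsupp.single a 1) (t (e + 1)) = _
  rw [hAB]
  rcases le_or_gt a e with hae | hae
  · rw [if_pos hae, if_pos hae]
    have hconv : (-(t (e - a + 1) - (if e - a = 0 then 1 else 0)) : MvPowerSeries ℕ ℚ) μ =
        C μ (-(t (e - a + 1) - (if e - a = 0 then (1 : MvPowerSeries ℕ ℚ) else 0))) := rfl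
    rw [hconv, map_neg, map_sub]
    by_cases h0 : e - a = 0
    · rw [if_pos h0, MvPowerSeries.coeff_one]
      by_cases hμ : μ = 0
      · rw [if_pos ⟨h0, hμ⟩, if_pos hμ]
        ring
      · rw [if_neg (by tauto), if_neg hμ]
        ring
    · rw [if_neg h0, map_zero, if_neg (by tauto)]
      ring
  · rw [if_neg (by omega : ¬a ≤ e), if_neg (by omega : ¬a ≤ e)]
    rfl


end Tlem

end Aux5
section Aux6

open Finsupp Finset

local notation "C" => MvPowerSeries.coeff (R := ℚ)

variable {σ τ : Type*}

/-! #### more pd lemmas -/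

lemma pd_add (v : σ) (f g : MvPowerSeries σ ℚ) : pd v (f + g) = pd v f + pd v g := by
  funext m
  show ((m v + 1 : ℕ) : ℚ) * C (m + Finsupp.single v 1) (f + g) = _
  have : (pd v f + pd v g) m = C m (pd v f) + C m (pd v g) := rfl
  rw [this, map_add, coeff_pd, coeff_pd]
  ring

lemma pd_neg (v : σ) (f : MvPowerSeries σ ℚ) : pd v (-f) = -(pd v f) := by
  funext m
  show ((m v + 1 : ℕ) : ℚ) * C (m + Finsupp.single v 1) (-f) = _
  have : (-(pd v f)) m = -(C m (pd v f)) := rfl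
  rw [this, map_neg, coeff_pd]
  ring

lemma pd_X (v c : σ) :
    pd v (MvPowerSeries.X c : MvPowerSeries σ ℚ) = if v = c then 1 else 0 := by
  funext m
  show ((m v + 1 : ℕ) : ℚ) * C (m + Finsupp.single v 1) (MvPowerSeries.X c) =
    ((if v = c then 1 else 0 : MvPowerSeries σ ℚ)) m
  rw [MvPowerSeries.coeff_X]
  by_cases hvc : v = c
  · subst hvc
    rw [if_pos rfl]
    by_cases hm : m = 0
    · subst hm
      rw [if_pos (zero_add _), ]
      have : (1 : MvPowerSeries σ ℚ) 0 = 1 := by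
        show C 0 (1 : MvPowerSeries σ ℚ) = 1
        rw [MvPowerSeries.coeff_one, if_pos rfl]
      rw [this]
      simp
    · rw [if_neg ?hc]
      case hc =>
        intro hEq
        apply hm
        ext i
        have h2 := DFunLike.congr_fun hEq i
        simp only [Finsupp.add_apply, fs_single_apply, Finsupp.coe_zero, Pi.zero_apply] at *
        split_ifs at h2 <;> omega
      rw [mul_zero]
      have : (1 : MvPowerSeries σ ℚ) m = C m (1 : MvPowerSeries σ ℚ) := rfl
      rw [this, MvPowerSeries.coeff_one, if_neg hm]
  · rw [if_neg hvc]
    rw [if_neg ?hc2]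
    case hc2 =>
      intro hEq
      have h2 := DFunLike.congr_fun hEq v
      rw [Finsupp.add_apply, Finsupp.single_eq_same,
        Finsupp.single_eq_of_ne' (fun h => hvc h.symm)] at h2
      omega
    rw [mul_zero]
    rfl

/-! #### order and homogeneity of sums, negation, X -/

lemma OrdGe_X (i : σ) : OrdGe 1 (MvPowerSeries.X i : MvPowerSeries σ ℚ) := by
  intro m hm
  have hm0 : m = 0 := mdeg_eq_zero (by omega)
  subst hm0
  rw [MvPowerSeries.coeff_X, if_neg]
  intro h
  have := DFunLike.congr_fun h i
  simp only [Finsupp.coe_zero, Pi.zero_apply, Finsupp.single_eq_same] at this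
  omega

lemma OrdGe_add {p : ℕ} {f g : MvPowerSeries σ ℚ} (hf : OrdGe p f) (hg : OrdGe p g) :
    OrdGe p (f + g) := by
  intro m hm
  rw [map_add, hf m hm, hg m hm, add_zero]

lemma OrdGe_neg {p : ℕ} {f : MvPowerSeries σ ℚ} (hf : OrdGe p f) : OrdGe p (-f) := by
  intro m hm
  rw [map_neg, hf m hm, neg_zero]

lemma Homog_X (w : σ → ℤ) (i : σ) :
    Homog w (w i) (MvPowerSeries.X i : MvPowerSeries σ ℚ) := by
  intro m hm
  rw [MvPowerSeries.coeff_X] at hm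
  split_ifs at hm with h
  · rw [h, mwt_single]
    ring
  · exact absurd rfl hm

lemma Homog_add {w : σ → ℤ} {c : ℤ} {f g : MvPowerSeries σ ℚ} (hf : Homog w c f)
    (hg : Homog w c g) : Homog w c (f + g) := by
  intro m hm
  rw [map_add] at hm
  rcases eq_or_ne (C m f) 0 with h | h
  · exact hg m (fun h0 => hm (by rw [h, h0, add_zero]))
  · exact hf m h

lemma Homog_neg {w : σ → ℤ} {c : ℤ} {f : MvPowerSeries σ ℚ} (hf : Homog w c f) :
    Homog w c (-f) := by
  intro m hm
  rw [map_neg, neg_ne_zero] at hm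
  exact hf m hm

/-! #### goodness from weights -/

lemma wsupport_bound (w : σ → ℤ) (hw : ∀ i, 0 ≤ w i) {n : σ →₀ ℕ} {i : σ}
    (hi : i ∈ n.support) : w i ≤ mwt w n := by
  rw [mwt, Finsupp.sum]
  have h1 : w i ≤ (n i : ℤ) * w i := by
    have : (1 : ℤ) ≤ (n i : ℤ) := by
      have := Finsupp.mem_support_iff.mp hi
      omega
    nlinarith [hw i]
  calc w i ≤ (n i : ℤ) * w i := h1
    _ ≤ ∑ j ∈ n.support, (n j : ℤ) * w j :=
      Finset.single_le_sum (f := fun j => (n j : ℤ) * w j)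
        (fun j _ => mul_nonneg (by positivity) (hw j)) hi

lemma Good_of_weights (u : σ → MvPowerSeries τ ℚ) (w : σ → ℤ) (W : τ → ℤ)
    (hw : ∀ i, 0 ≤ w i) (hord : ∀ i, OrdGe 1 (u i)) (hhom : ∀ i, Homog W (w i) (u i))
    (hfin : ∀ B : ℤ, {i : σ | w i ≤ B}.Finite) : Good u := by
  refine ⟨hord, fun m => ?_⟩
  refine (finite_bounded (hfin (mwt W m)).toFinset (mdeg m)).subset ?_
  intro n hn
  simp only [Set.mem_setOf_eq] at hn
  have h1 : mwt W m = mwt w n := Homog_P hhom n m hn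
  constructor
  · intro i hi
    simp only [Finset.mem_coe] at hi
    simp only [Finset.coe_sort_coe, Set.Finite.coe_toFinset, Set.mem_setOf_eq]
    rw [h1]
    exact wsupport_bound w hw hi
  · by_contra h
    push_neg at h
    exact hn (OrdGe_P hord n m h)

/-! #### the concrete families -/

/-- the substitution family `s_b ↦ s⁰_b + s_b` -/
def vvF : ℕ → MvPowerSeries (ℕ ⊕ ℕ) ℚ :=
  fun b => MvPowerSeries.X (Sum.inl b) + MvPowerSeries.X (Sum.inr b)

/-- the weight function on the target variables -/
def WW : ℕ ⊕ ℕ → ℤ := Sum.elim (fun a : ℕ => (a : ℤ)) (fun a : ℕ => (a : ℤ))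

lemma Good_vv : Good vvF := by
  refine Good_of_weights vvF (fun b : ℕ => (b : ℤ)) WW (fun i => by positivity)
    (fun b => OrdGe_add (OrdGe_X _) (OrdGe_X _)) (fun b => ?_) (fun B => ?_)
  · exact Homog_add (Homog_X WW (Sum.inl b)) (Homog_X WW (Sum.inr b))
  · refine (Set.finite_Iic B.toNat).subset fun i hi => ?_
    simp only [Set.mem_setOf_eq] at hi
    simp only [Set.mem_Iic]
    omega

lemma OrdGe_subst {u : σ → MvPowerSeries τ ℚ} (hu : Good u) {f : MvPowerSeries σ ℚ}
    (hf : OrdGe 1 f) : OrdGe 1 (subst f u) := by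
  intro m hm
  have hm0 : m = 0 := mdeg_eq_zero (by omega)
  subst hm0
  rw [coeff_subst hu]
  refine Finset.sum_eq_zero fun n _ => ?_
  rcases eq_or_ne n 0 with rfl | h
  · rw [hf 0 (by rw [mdeg_zero]; omega), zero_mul]
  · have hpos : 0 < mdeg n := by
      rcases Nat.eq_zero_or_pos (mdeg n) with h0 | h0
      · exact absurd (mdeg_eq_zero h0) h
      · exact h0
    have hz : C 0 (Pn u n) = 0 := OrdGe_P hu.ord n 0 (by rw [mdeg_zero]; omega)
    rw [hz, mul_zero]

lemma Homog_subst {u : σ → MvPowerSeries τ ℚ} (hu : Good u) {w : σ → ℤ} {W : τ → ℤ}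
    {c : ℤ} {f : MvPowerSeries σ ℚ} (hf : Homog w c f)
    (hhom : ∀ i, Homog W (w i) (u i)) : Homog W c (subst f u) := by
  intro m hm
  rw [coeff_subst hu] at hm
  obtain ⟨n, _, hne⟩ := Finset.exists_ne_zero_of_sum_ne_zero hm
  have h1 := Homog_P hhom n m (right_ne_zero_of_mul hne)
  have h2 := hf n (left_ne_zero_of_mul hne)
  rw [h1, h2]

/-- the substitution family for the main theorem -/
def uuF (t : ℕ → MvPowerSeries ℕ ℚ) : ℕ ⊕ ℕ → MvPowerSeries (ℕ ⊕ ℕ) ℚ :=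
  Sum.elim (fun j => subst (t (j + 1)) vvF) (fun b => -(MvPowerSeries.X (Sum.inr b)))

lemma Good_uu {t : ℕ → MvPowerSeries ℕ ℚ} (ht : DefIdent t) : Good (uuF t) := by
  refine Good_of_weights (uuF t)
    (Sum.elim (fun j : ℕ => (j : ℤ)) (fun b : ℕ => (b : ℤ))) WW
    (fun i => by cases i <;> simp) (fun i => ?_) (fun i => ?_) (fun B => ?_)
  · cases i with
    | inl j => exact OrdGe_subst Good_vv (OrdGe_t ht j)
    | inr b => exact OrdGe_neg (OrdGe_X _)
  · cases i with
    | inl j =>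
      exact Homog_subst Good_vv (Homog_t ht j)
        (fun b => Homog_add (Homog_X WW (Sum.inl b)) (Homog_X WW (Sum.inr b)))
    | inr b => exact Homog_neg (Homog_X WW (Sum.inr b))
  · have h1 : {i : ℕ ⊕ ℕ | Sum.elim (fun j : ℕ => (j : ℤ)) (fun b : ℕ => (b : ℤ)) i ≤ B} ⊆
        (Sum.inl '' {j : ℕ | (j : ℤ) ≤ B}) ∪ (Sum.inr '' {b : ℕ | (b : ℤ) ≤ B}) := by
      intro i hi
      cases i with
      | inl j => exact Set.mem_union_left _ ⟨j, hi, rfl⟩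
      | inr b => exact Set.mem_union_right _ ⟨b, hi, rfl⟩
    have h2 : {j : ℕ | (j : ℤ) ≤ B}.Finite := by
      refine (Set.finite_Iic B.toNat).subset fun i hi => ?_
      simp only [Set.mem_setOf_eq] at hi
      simp only [Set.mem_Iic]
      omega
    exact ((h2.image Sum.inl).union (h2.image Sum.inr)).subset h1

end Aux6
section Aux7

open Finsupp Finset

local notation "C" => MvPowerSeries.coeff (R := ℚ)

variable {σ τ : Type*}

lemma subst_zero (u : σ → MvPowerSeries τ ℚ) : subst 0 u = 0 := by
  funext m
  show ∑ᶠ n : σ →₀ ℕ, C n (0 : MvPowerSeries σ ℚ) * C m (Pn u n) =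
    (0 : MvPowerSeries τ ℚ) m
  have : (0 : MvPowerSeries τ ℚ) m = 0 := rfl
  rw [this]
  refine finsum_eq_zero_of_forall_eq_zero fun n => ?_
  rw [map_zero, zero_mul]

lemma subst_neg {u : σ → MvPowerSeries τ ℚ} (hu : Good u) (F : MvPowerSeries σ ℚ) :
    subst (-F) u = -(subst F u) := by
  rw [show -F = 0 - F from (zero_sub F).symm, subst_sub hu, subst_zero, zero_sub]

lemma subst_ttil {u' : (ℕ ⊕ ℕ) → MvPowerSeries τ ℚ} (hu : Good u') (j : ℕ)
    (D : MvPowerSeries (ℕ ⊕ ℕ) ℚ) :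
    subst (ttil j * D) u' = subst D u' * (u' (Sum.inl j) - (if j = 0 then 1 else 0)) := by
  rcases eq_or_ne j 0 with rfl | hj
  · rw [ttil, if_pos rfl, if_pos rfl, sub_mul, one_mul, subst_sub hu, subst_X_mul hu,
      mul_sub, mul_one]
  · rw [ttil, if_neg hj, if_neg hj, sub_zero, sub_zero, subst_X_mul hu]

lemma coeff_ttil_mul_zero {D : MvPowerSeries (ℕ ⊕ ℕ) ℚ} {n : (ℕ ⊕ ℕ) →₀ ℕ} {j : ℕ}
    (hj : j ≠ 0) (hn : n (Sum.inl j) = 0) : C n (ttil j * D) = 0 := by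
  rw [ttil, if_neg hj, sub_zero, coeff_X_mul',
    if_neg (fun hle => (single_le_iff'.mp hle) hn)]

lemma coeff_subst_recursion {u' : (ℕ ⊕ ℕ) → MvPowerSeries τ ℚ} (hu : Good u')
    {K : MvPowerSeries (ℕ ⊕ ℕ) ℚ} (hK : Recursion K) (a : ℕ) (m : τ →₀ ℕ) :
    C m (subst (pd (Sum.inr a) K) u') =
      -∑ᶠ j : ℕ, C m (subst (ttil j * pd (Sum.inl (j + a)) K) u') := by
  classical
  set G : ℕ → MvPowerSeries (ℕ ⊕ ℕ) ℚ := fun j => ttil j * pd (Sum.inl (j + a)) K with hG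
  set JJ : Finset ℕ := insert 0 ((Nfin hu m).biUnion fun n =>
    n.support.image (Sum.elim id id)) with hJJ
  have hGJ : ∀ n ∈ Nfin hu m, ∀ j : ℕ, C n (G j) ≠ 0 → j ∈ JJ := by
    intro n hn j hne
    rcases eq_or_ne j 0 with rfl | hj
    · exact Finset.mem_insert_self _ _
    · rcases eq_or_ne (n (Sum.inl j)) 0 with h0 | h0
      · exact absurd (coeff_ttil_mul_zero hj h0) hne
      · refine Finset.mem_insert_of_mem (Finset.mem_biUnion.mpr ⟨n, hn, ?_⟩)
        exact Finset.mem_image.mpr ⟨Sum.inl j, Finsupp.mem_support_iff.mpr h0, rfl⟩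
  have hKn : ∀ n : (ℕ ⊕ ℕ) →₀ ℕ, C n (pd (Sum.inr a) K) = -∑ᶠ j : ℕ, C n (G j) := by
    intro n
    rw [hK a]
    rfl
  have h1 : C m (subst (pd (Sum.inr a) K) u') =
      ∑ n ∈ Nfin hu m, -(∑ j ∈ JJ, C n (G j) * C m (Pn u' n)) := by
    rw [coeff_subst hu]
    refine Finset.sum_congr rfl fun n hn => ?_
    rw [hKn n, finsum_eq_sum_st (fun j hj => hGJ n hn j hj), neg_mul, Finset.sum_mul]
  have h2 : ∑ᶠ j : ℕ, C m (subst (G j) u') = ∑ j ∈ JJ, C m (subst (G j) u') := by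
    refine finsum_eq_sum_st fun j hj => ?_
    rw [coeff_subst hu] at hj
    obtain ⟨n, hn, hne⟩ := Finset.exists_ne_zero_of_sum_ne_zero hj
    exact hGJ n hn j (left_ne_zero_of_mul hne)
  rw [h1, h2, Finset.sum_neg_distrib, neg_inj, Finset.sum_comm]
  exact Finset.sum_congr rfl fun j _ => (coeff_subst hu (G j) m).symm

lemma finsum_sum_type {M : Type*} [AddCommMonoid M] {α β : Type*} {f : α ⊕ β → M}
    (hf : (Function.support f).Finite) :
    ∑ᶠ c, f c = (∑ᶠ x, f (Sum.inl x)) + ∑ᶠ y, f (Sum.inr y) := by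
  rw [← finsum_mem_univ f, ← Set.range_inl_union_range_inr,
    finsum_mem_union' Set.isCompl_range_inl_range_inr.disjoint
      (hf.subset Set.inter_subset_right) (hf.subset Set.inter_subset_right),
    finsum_mem_range Sum.inl_injective, finsum_mem_range Sum.inr_injective]

/-! #### derivative of the composite family -/

lemma pd_vv (a b : ℕ) : pd (Sum.inr a) (vvF b) = if a = b then 1 else 0 := by
  show pd (Sum.inr a) (MvPowerSeries.X (Sum.inl b) + MvPowerSeries.X (Sum.inr b)) = _
  rw [pd_add, pd_X, pd_X, if_neg (by simp : ¬(Sum.inr a : ℕ ⊕ ℕ) = Sum.inl b), zero_add]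
  by_cases hab : a = b
  · rw [if_pos (by rw [hab]), if_pos hab]
  · rw [if_neg (by simp [hab]), if_neg hab]

lemma pd_subst_vv (f : MvPowerSeries ℕ ℚ) (a : ℕ) :
    pd (Sum.inr a) (subst f vvF) = subst (pd a f) vvF := by
  funext m
  show C m (pd (Sum.inr a) (subst f vvF)) = C m (subst (pd a f) vvF)
  rw [pd_subst_coeff Good_vv]
  rw [finsum_eq_single _ a ?hz]
  case hz =>
    intro b hb
    rw [pd_vv, if_neg (fun h => hb h.symm), mul_zero, map_zero]
  rw [pd_vv, if_pos rfl, mul_one]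

variable {t : ℕ → MvPowerSeries ℕ ℚ}

lemma pd_uu_inl (ht : DefIdent t) (a j : ℕ) :
    pd (Sum.inr a) (uuF t (Sum.inl j)) = if a ≤ j then
      -(uuF t (Sum.inl (j - a)) - (if j - a = 0 then 1 else 0)) else 0 := by
  show pd (Sum.inr a) (subst (t (j + 1)) vvF) = _
  rw [pd_subst_vv, pd_t ht]
  rcases le_or_gt a j with h | h
  · rw [if_pos h, if_pos h]
    by_cases h0 : j - a = 0
    · rw [if_pos h0, if_pos h0, subst_neg Good_vv, subst_sub Good_vv, subst_one Good_vv]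
      rfl
    · rw [if_neg h0, if_neg h0, subst_neg Good_vv, subst_sub Good_vv, subst_zero]
      rfl
  · rw [if_neg (by omega), if_neg (by omega), subst_zero]

lemma pd_uu_inr (a b : ℕ) :
    pd (Sum.inr a) (uuF t (Sum.inr b)) = -(if a = b then 1 else 0) := by
  show pd (Sum.inr a) (-(MvPowerSeries.X (Sum.inr b))) = _
  rw [pd_neg, pd_X]
  by_cases hab : a = b
  · rw [if_pos (by rw [hab]), if_pos hab]
  · rw [if_neg (by simp [hab]), if_neg hab]

end Aux7
section Final

open Finsupp Finset

local notation "C" => MvPowerSeries.coeff (R := ℚ)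

/-- The composite `K(t(s⁰ + s), -s)` lives in the ring with variables indexed by
`ℕ ⊕ ℕ`, where `Sum.inl a` denotes `s⁰_a` and `Sum.inr a` denotes `s_a`:  all of its
partial derivatives with respect to the variables `s_a` vanish. -/
theorem stmt5 (K : MvPowerSeries (ℕ ⊕ ℕ) ℚ) (hK : Recursion K)
    (t : ℕ → MvPowerSeries ℕ ℚ) (ht : DefIdent t) :
    ∀ a : ℕ,
      pd (Sum.inr a)
        (subst K (Sum.elim
          (fun j => subst (t (j + 1))
            (fun b => MvPowerSeries.X (Sum.inl b) + MvPowerSeries.X (Sum.inr b)))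
          (fun b => -(MvPowerSeries.X (Sum.inr b))))) = 0 := by
  intro a
  have hu : Good (uuF t) := Good_uu ht
  show pd (Sum.inr a) (subst K (uuF t)) = 0
  funext m
  show C m (pd (Sum.inr a) (subst K (uuF t))) = (0 : ℚ)
  rw [pd_subst_coeff hu K (Sum.inr a) m]
  rw [finsum_sum_type ?hfin]
  case hfin =>
    refine ((CSf hu (Sum.inr a) m).finite_toSet).subset fun c hc => ?_
    by_contra h
    exact hc (pd_mul_coeff_zero h _)
  -- the `inr` part
  have hinr : ∑ᶠ b : ℕ, C m (subst (pd (Sum.inr b) K) (uuF t) *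
      pd (Sum.inr a) (uuF t (Sum.inr b))) =
      -(C m (subst (pd (Sum.inr a) K) (uuF t))) := by
    rw [finsum_eq_single _ a ?hz]
    case hz =>
      intro b hb
      rw [pd_uu_inr, if_neg (fun h => hb h.symm), neg_zero, mul_zero, map_zero]
    rw [pd_uu_inr, if_pos rfl, mul_neg, mul_one, map_neg]
  -- use the recursion for the `inr` part
  have hrec : C m (subst (pd (Sum.inr a) K) (uuF t)) =
      -∑ᶠ j : ℕ, C m (subst (pd (Sum.inl (j + a)) K) (uuF t) *
        (uuF t (Sum.inl j) - (if j = 0 then 1 else 0))) := by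
    rw [coeff_subst_recursion hu hK a m]
    congr 1
    exact finsum_congr fun j => by rw [subst_ttil hu]
  -- the `inl` part
  have hinl : ∑ᶠ j : ℕ, C m (subst (pd (Sum.inl j) K) (uuF t) *
      pd (Sum.inr a) (uuF t (Sum.inl j))) =
      ∑ᶠ j : ℕ, -(C m (subst (pd (Sum.inl (j + a)) K) (uuF t) *
        (uuF t (Sum.inl j) - (if j = 0 then 1 else 0)))) := by
    rw [finsum_shift (fun i : ℕ => i + a) (add_left_injective a) _ ?hvan]
    case hvan =>
      intro j hj
      have hja : j < a := by
        by_contra hja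
        exact hj ⟨j - a, by show j - a + a = j; omega⟩
      rw [pd_uu_inl ht, if_neg (by omega), mul_zero, map_zero]
    refine finsum_congr fun i => ?_
    rw [pd_uu_inl ht, if_pos (by omega : a ≤ i + a)]
    have hia : i + a - a = i := by omega
    rw [hia, mul_neg, map_neg]
  rw [hinl, hinr, hrec, neg_neg, finsum_neg_distrib]
  exact neg_add_cancel _

end Final
end
end

section
/- Suppose formal series G_0(x; s) and G_1(x; s) arise from F_0 and F_1 via G_g(x, s) = F_g(x, t(s)) with the exponential change of variables, and F_0, F_1 satisfy the genus-one topological recursion relation ∂F_1/∂t_d = (∂²F_0/(∂t_{d-1} ∂x^ρ)) η^{ρσ} (∂F_1/∂x^σ) + (1/24) η^{ρσ} ∂³F_0/(∂t_{d-1} ∂x^ρ ∂x^σ) for all d ≥ 1. Then for all a ≥ 1: ∂G_1/∂s_a = (∂²G_0/(∂s_{a-1} ∂x^ρ)) η^{ρσ} (∂G_1/∂x^σ) + (1/24) η^{ρσ} ∂³G_0/(∂s_{a-1} ∂x^ρ ∂x^σ). -/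
noncomputable section
open MvPowerSeries
open scoped Classical

/-- In the ring of `F`, `Sum.inl ()` is the variable `x` and `Sum.inr j` is `t_{j+1}`;
in the ring of `G`, `Sum.inl ()` is `x` and `Sum.inr a` is `s_a` (the case `r = 1`,
`η = 1`).  `Dx` is `∂/∂x`. -/
abbrev Dx : MvPowerSeries (Unit ⊕ ℕ) ℚ → MvPowerSeries (Unit ⊕ ℕ) ℚ := pd (Sum.inl ())

/-- `∂/∂t_d`, with the derivative with respect to `t_0` interpreted as `∂/∂x`. -/
def Dt (d : ℕ) : MvPowerSeries (Unit ⊕ ℕ) ℚ → MvPowerSeries (Unit ⊕ ℕ) ℚ :=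
  if d = 0 then Dx else pd (Sum.inr (d - 1))

/-- the substitution realizing `G(x, s) = F(x, t(s))` -/
def chg (t : ℕ → MvPowerSeries ℕ ℚ) : Unit ⊕ ℕ → MvPowerSeries (Unit ⊕ ℕ) ℚ :=
  Sum.elim (fun _ => MvPowerSeries.X (Sum.inl ()))
    (fun j => subst (t (j + 1)) (fun a => MvPowerSeries.X (Sum.inr a)))

namespace Aux

variable {σ : Type*}

lemma apply_eq_coeff {σ : Type*} (f : MvPowerSeries σ ℚ) (m : σ →₀ ℕ) :
    f m = MvPowerSeries.coeff m f := rfl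

lemma mdeg_def (m : σ →₀ ℕ) : mdeg m = ∑ j ∈ m.support, m j := rfl

lemma mdeg_add (m n : σ →₀ ℕ) : mdeg (m + n) = mdeg m + mdeg n :=
  Finsupp.sum_add_index' (fun _ => rfl) (fun _ _ _ => rfl)

lemma mdeg_single (i : σ) (k : ℕ) : mdeg (Finsupp.single i k) = k :=
  Finsupp.sum_single_index rfl

@[simp] lemma mdeg_zero : mdeg (0 : σ →₀ ℕ) = 0 := by simp [mdeg]

lemma le_mdeg (m : σ →₀ ℕ) (i : σ) : m i ≤ mdeg m := by
  by_cases h : i ∈ m.support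
  · exact Finset.single_le_sum (fun j _ => Nat.zero_le _) h
  · simp [Finsupp.notMem_support_iff.mp h]

lemma mdeg_eq_zero {m : σ →₀ ℕ} (h : mdeg m = 0) : m = 0 := by
  ext i
  have := le_mdeg m i
  simp only [Finsupp.coe_zero, Pi.zero_apply]
  omega

lemma mdeg_mono {p q : σ →₀ ℕ} (h : p ≤ q) : mdeg p ≤ mdeg q := by
  have h2 : p + (q - p) = q := add_tsub_cancel_of_le h
  calc mdeg p ≤ mdeg p + mdeg (q - p) := Nat.le_add_right _ _
    _ = mdeg q := by rw [← mdeg_add, h2]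

/-- weighted degree of a monomial -/
def wdeg (w : σ → ℤ) (m : σ →₀ ℕ) : ℤ := m.sum fun i k => w i * k

lemma wdeg_def (w : σ → ℤ) (m : σ →₀ ℕ) : wdeg w m = ∑ j ∈ m.support, w j * m j := rfl

lemma wdeg_add (w : σ → ℤ) (m n : σ →₀ ℕ) : wdeg w (m + n) = wdeg w m + wdeg w n :=
  Finsupp.sum_add_index' (fun i => by simp) (fun i b c => by push_cast; ring)

lemma wdeg_single (w : σ → ℤ) (i : σ) (k : ℕ) : wdeg w (Finsupp.single i k) = w i * k :=
  Finsupp.sum_single_index (by simp)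

@[simp] lemma wdeg_zero (w : σ → ℤ) : wdeg w (0 : σ →₀ ℕ) = 0 := by simp [wdeg]

lemma wdeg_nonneg {w : σ → ℤ} (hw : ∀ i, 0 ≤ w i) (m : σ →₀ ℕ) : 0 ≤ wdeg w m :=
  Finset.sum_nonneg fun j _ => mul_nonneg (hw j) (by positivity)

lemma le_wdeg {w : σ → ℤ} (hw : ∀ i, 0 ≤ w i) (m : σ →₀ ℕ) (i : σ) :
    w i * m i ≤ wdeg w m := by
  by_cases h : i ∈ m.support
  · exact Finset.single_le_sum (f := fun j => w j * (m j : ℤ))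
      (fun j _ => mul_nonneg (hw j) (by positivity)) h
  · have h0 := Finsupp.notMem_support_iff.mp h
    rw [h0]
    simpa using wdeg_nonneg hw m

lemma wdeg_mono {w : σ → ℤ} (hw : ∀ i, 0 ≤ w i) {p q : σ →₀ ℕ} (h : p ≤ q) :
    wdeg w p ≤ wdeg w q := by
  have hpq : p + (q - p) = q := add_tsub_cancel_of_le h
  calc wdeg w p ≤ wdeg w p + wdeg w (q - p) := le_add_of_nonneg_right (wdeg_nonneg hw _)
    _ = wdeg w q := by rw [← wdeg_add, hpq]

/-! ### basic properties of `pd` -/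

lemma coeff_pd (i : σ) (f : MvPowerSeries σ ℚ) (m : σ →₀ ℕ) :
    MvPowerSeries.coeff m (pd i f) =
      ((m i + 1 : ℕ) : ℚ) * MvPowerSeries.coeff (m + Finsupp.single i 1) f := rfl

lemma pd_add (i : σ) (f g : MvPowerSeries σ ℚ) : pd i (f + g) = pd i f + pd i g := by
  funext m
  show ((m i + 1 : ℕ) : ℚ) * MvPowerSeries.coeff (m + Finsupp.single i 1) (f + g)
    = ((m i + 1 : ℕ) : ℚ) * MvPowerSeries.coeff (m + Finsupp.single i 1) f
      + ((m i + 1 : ℕ) : ℚ) * MvPowerSeries.coeff (m + Finsupp.single i 1) g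
  rw [map_add]
  ring

lemma pd_smul (i : σ) (c : ℚ) (f : MvPowerSeries σ ℚ) : pd i (c • f) = c • pd i f := by
  funext m
  show ((m i + 1 : ℕ) : ℚ) * MvPowerSeries.coeff (m + Finsupp.single i 1) (c • f)
    = c * (((m i + 1 : ℕ) : ℚ) * MvPowerSeries.coeff (m + Finsupp.single i 1) f)
  rw [MvPowerSeries.coeff_smul]
  ring

lemma pd_zero (i : σ) : pd i (0 : MvPowerSeries σ ℚ) = 0 := by
  funext m
  show ((m i + 1 : ℕ) : ℚ) * MvPowerSeries.coeff (m + Finsupp.single i 1)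
    (0 : MvPowerSeries σ ℚ) = 0
  simp

lemma pd_one (i : σ) : pd i (1 : MvPowerSeries σ ℚ) = 0 := by
  funext m
  show ((m i + 1 : ℕ) : ℚ) * MvPowerSeries.coeff (m + Finsupp.single i 1) 1 = 0
  rw [MvPowerSeries.coeff_one, if_neg, mul_zero]
  intro h
  have := DFunLike.congr_fun h i
  simp [Finsupp.single_apply] at this

lemma pd_mul (i : σ) (f g : MvPowerSeries σ ℚ) :
    pd i (f * g) = pd i f * g + f * pd i g := by
  funext m
  have key : pd i (f * g) m
      = (Finset.HasAntidiagonal.antidiagonal (m + Finsupp.single i 1)).sum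
          (fun p : (σ →₀ ℕ) × (σ →₀ ℕ) =>
            ((p.1 i : ℚ) + (p.2 i : ℚ)) *
              (MvPowerSeries.coeff p.1 f * MvPowerSeries.coeff p.2 g)) := by
    show ((m i + 1 : ℕ) : ℚ) * MvPowerSeries.coeff (m + Finsupp.single i 1) (f * g) = _
    rw [MvPowerSeries.coeff_mul, Finset.mul_sum]
    refine Finset.sum_congr rfl fun p hp => ?_
    have hmem := Finset.HasAntidiagonal.mem_antidiagonal.mp hp
    have h1 : p.1 i + p.2 i = m i + 1 := by
      have := DFunLike.congr_fun hmem i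
      simpa [Finsupp.single_apply] using this
    have h2 : ((p.1 i : ℚ) + (p.2 i : ℚ)) = ((m i + 1 : ℕ) : ℚ) := by
      push_cast
      exact_mod_cast congrArg (Nat.cast : ℕ → ℚ) h1
    rw [h2]
  rw [key]
  have split : (Finset.HasAntidiagonal.antidiagonal (m + Finsupp.single i 1)).sum
      (fun p : (σ →₀ ℕ) × (σ →₀ ℕ) =>
        ((p.1 i : ℚ) + (p.2 i : ℚ)) *
          (MvPowerSeries.coeff p.1 f * MvPowerSeries.coeff p.2 g))
      = (Finset.HasAntidiagonal.antidiagonal (m + Finsupp.single i 1)).sum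
          (fun p : (σ →₀ ℕ) × (σ →₀ ℕ) =>
            (p.1 i : ℚ) * (MvPowerSeries.coeff p.1 f * MvPowerSeries.coeff p.2 g))
        + (Finset.HasAntidiagonal.antidiagonal (m + Finsupp.single i 1)).sum
          (fun p : (σ →₀ ℕ) × (σ →₀ ℕ) =>
            (p.2 i : ℚ) * (MvPowerSeries.coeff p.1 f * MvPowerSeries.coeff p.2 g)) := by
    rw [← Finset.sum_add_distrib]
    exact Finset.sum_congr rfl fun p _ => by ring
  rw [split]
  show _ = MvPowerSeries.coeff m (pd i f * g) + MvPowerSeries.coeff m (f * pd i g)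
  rw [MvPowerSeries.coeff_mul, MvPowerSeries.coeff_mul]
  congr 1
  · -- first sum
    rw [← Finset.sum_filter_of_ne
      (p := fun p : (σ →₀ ℕ) × (σ →₀ ℕ) => p.1 i ≠ 0)
      (fun p _ h => by
        intro h0
        apply h
        rw [h0]
        simp)]
    refine Finset.sum_nbij' (fun p : (σ →₀ ℕ) × (σ →₀ ℕ) => (p.1 - Finsupp.single i 1, p.2))
      (fun q : (σ →₀ ℕ) × (σ →₀ ℕ) => (q.1 + Finsupp.single i 1, q.2)) ?_ ?_ ?_ ?_ ?_
    · intro p hp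
      simp only [Finset.mem_filter, Finset.HasAntidiagonal.mem_antidiagonal] at hp
      rw [Finset.HasAntidiagonal.mem_antidiagonal]
      ext j
      have hj := DFunLike.congr_fun hp.1 j
      simp only [Finsupp.add_apply, Finsupp.tsub_apply] at hj ⊢
      rcases eq_or_ne i j with h | h
      · subst h
        simp only [Finsupp.single_eq_same] at hj ⊢
        omega
      · rw [Finsupp.single_eq_of_ne h.symm] at hj ⊢
        omega
    · intro q hq
      rw [Finset.HasAntidiagonal.mem_antidiagonal] at hq
      simp only [Finset.mem_filter, Finset.HasAntidiagonal.mem_antidiagonal]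
      refine ⟨by rw [add_right_comm, hq], ?_⟩
      simp [Finsupp.add_apply, Finsupp.single_eq_same]
    · intro p hp
      simp only [Finset.mem_filter, Finset.HasAntidiagonal.mem_antidiagonal] at hp
      have hle : Finsupp.single i 1 ≤ p.1 := by
        rw [Finsupp.single_le_iff]
        omega
      simp [tsub_add_cancel_of_le hle]
    · intro q _
      simp
    · intro p hp
      simp only [Finset.mem_filter, Finset.HasAntidiagonal.mem_antidiagonal] at hp
      dsimp only
      have hle : Finsupp.single i 1 ≤ p.1 := by
        rw [Finsupp.single_le_iff]; omega
      have h1 : (p.1 - Finsupp.single i 1) + Finsupp.single i 1 = p.1 :=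
        tsub_add_cancel_of_le hle
      have h2 : (p.1 - Finsupp.single i 1 : σ →₀ ℕ) i + 1 = p.1 i := by
        rw [Finsupp.tsub_apply, Finsupp.single_eq_same]
        omega
      rw [coeff_pd, h1, h2]
      ring
  · -- second sum
    rw [← Finset.sum_filter_of_ne
      (p := fun p : (σ →₀ ℕ) × (σ →₀ ℕ) => p.2 i ≠ 0)
      (fun p _ h => by
        intro h0
        apply h
        rw [h0]
        simp)]
    refine Finset.sum_nbij' (fun p : (σ →₀ ℕ) × (σ →₀ ℕ) => (p.1, p.2 - Finsupp.single i 1))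
      (fun q : (σ →₀ ℕ) × (σ →₀ ℕ) => (q.1, q.2 + Finsupp.single i 1)) ?_ ?_ ?_ ?_ ?_
    · intro p hp
      simp only [Finset.mem_filter, Finset.HasAntidiagonal.mem_antidiagonal] at hp
      rw [Finset.HasAntidiagonal.mem_antidiagonal]
      ext j
      have hj := DFunLike.congr_fun hp.1 j
      simp only [Finsupp.add_apply, Finsupp.tsub_apply] at hj ⊢
      rcases eq_or_ne i j with h | h
      · subst h
        simp only [Finsupp.single_eq_same] at hj ⊢
        omega
      · rw [Finsupp.single_eq_of_ne h.symm] at hj ⊢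
        omega
    · intro q hq
      rw [Finset.HasAntidiagonal.mem_antidiagonal] at hq
      simp only [Finset.mem_filter, Finset.HasAntidiagonal.mem_antidiagonal]
      refine ⟨by rw [← add_assoc, hq], ?_⟩
      simp [Finsupp.add_apply, Finsupp.single_eq_same]
    · intro p hp
      simp only [Finset.mem_filter, Finset.HasAntidiagonal.mem_antidiagonal] at hp
      have hle : Finsupp.single i 1 ≤ p.2 := by
        rw [Finsupp.single_le_iff]
        omega
      simp [tsub_add_cancel_of_le hle]
    · intro q _
      simp
    · intro p hp
      simp only [Finset.mem_filter, Finset.HasAntidiagonal.mem_antidiagonal] at hp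
      dsimp only
      have hle : Finsupp.single i 1 ≤ p.2 := by
        rw [Finsupp.single_le_iff]; omega
      have h1 : (p.2 - Finsupp.single i 1) + Finsupp.single i 1 = p.2 :=
        tsub_add_cancel_of_le hle
      have h2 : (p.2 - Finsupp.single i 1 : σ →₀ ℕ) i + 1 = p.2 i := by
        rw [Finsupp.tsub_apply, Finsupp.single_eq_same]
        omega
      rw [coeff_pd, h1, h2]
      ring

lemma pd_pow (i : σ) (g : MvPowerSeries σ ℚ) (b : ℕ) :
    pd i (g ^ (b + 1)) = ((b + 1 : ℕ) : ℚ) • (g ^ b * pd i g) := by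
  induction b with
  | zero => simp [pow_succ, pd_mul, pd_one]
  | succ b ih =>
      rw [pow_succ, pd_mul, ih, smul_eq_C_mul, smul_eq_C_mul]
      rw [show ((b + 1 + 1 : ℕ) : ℚ) = ((b + 1 : ℕ) : ℚ) + 1 by push_cast; ring]
      rw [map_add, map_one]
      ring

/-! ### order and homogeneity -/

/-- `f` has order at least `c`. -/
def Ordc (c : ℕ) (f : MvPowerSeries σ ℚ) : Prop :=
  ∀ m : σ →₀ ℕ, mdeg m < c → MvPowerSeries.coeff m f = 0

lemma ordc_one : Ordc 0 (f : MvPowerSeries σ ℚ) := fun m h => absurd h (Nat.not_lt_zero _)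

lemma ordc_mul {c d : ℕ} {f g : MvPowerSeries σ ℚ} (hf : Ordc c f) (hg : Ordc d g) :
    Ordc (c + d) (f * g) := by
  intro m hm
  rw [MvPowerSeries.coeff_mul]
  refine Finset.sum_eq_zero fun p hp => ?_
  have hmem := Finset.HasAntidiagonal.mem_antidiagonal.mp hp
  have hdeg : mdeg p.1 + mdeg p.2 = mdeg m := by rw [← mdeg_add, hmem]
  rcases Nat.lt_or_ge (mdeg p.1) c with h | h
  · rw [hf p.1 h, zero_mul]
  · rw [hg p.2 (by omega), mul_zero]

lemma ordc_pow {f : MvPowerSeries σ ℚ} (hf : Ordc 1 f) (k : ℕ) : Ordc k (f ^ k) := by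
  induction k with
  | zero =>
      intro m hm
      exact absurd hm (Nat.not_lt_zero _)
  | succ k ih =>
      rw [pow_succ]
      exact ordc_mul ih hf

/-- homogeneity of degree `d` with respect to the weight `w` -/
def Homo (w : σ → ℤ) (d : ℤ) (f : MvPowerSeries σ ℚ) : Prop :=
  ∀ m : σ →₀ ℕ, MvPowerSeries.coeff m f ≠ 0 → wdeg w m = d

lemma homo_one (w : σ → ℤ) : Homo w 0 (1 : MvPowerSeries σ ℚ) := by
  intro m hm
  rw [MvPowerSeries.coeff_one] at hm
  by_cases h : m = 0
  · rw [h]; simp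
  · rw [if_neg h] at hm; exact absurd rfl hm

lemma homo_mul {w : σ → ℤ} {c d : ℤ} {f g : MvPowerSeries σ ℚ}
    (hf : Homo w c f) (hg : Homo w d g) : Homo w (c + d) (f * g) := by
  intro m hm
  rw [MvPowerSeries.coeff_mul] at hm
  obtain ⟨p, hp, hne⟩ := Finset.exists_ne_zero_of_sum_ne_zero hm
  have hmem := Finset.HasAntidiagonal.mem_antidiagonal.mp hp
  have h1 : MvPowerSeries.coeff p.1 f ≠ 0 := left_ne_zero_of_mul hne
  have h2 : MvPowerSeries.coeff p.2 g ≠ 0 := right_ne_zero_of_mul hne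
  rw [← hmem, wdeg_add, hf p.1 h1, hg p.2 h2]

lemma homo_pow {w : σ → ℤ} {c : ℤ} {f : MvPowerSeries σ ℚ} (hf : Homo w c f) (k : ℕ) :
    Homo w (k * c) (f ^ k) := by
  induction k with
  | zero => rw [pow_zero, Nat.cast_zero, zero_mul]; exact homo_one w
  | succ k ih =>
      rw [pow_succ]
      have := homo_mul ih hf
      rwa [show (k : ℤ) * c + c = ((k+1 : ℕ) : ℤ) * c by push_cast; ring] at this

/-! ### products of powers over a `Finsupp` -/

variable {τ : Type*}

lemma prod_pow_add (u : τ → MvPowerSeries σ ℚ) (a : τ) (b : ℕ) (n : τ →₀ ℕ) :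
    ((Finsupp.single a b + n).prod fun i k => u i ^ k)
      = u a ^ b * n.prod fun i k => u i ^ k := by
  rw [Finsupp.prod_add_index' (fun i => pow_zero (u i)) (fun i b₁ b₂ => pow_add (u i) b₁ b₂),
    Finsupp.prod_single_index (h := fun i k => u i ^ k) (pow_zero (u a))]

lemma ordc_prod {u : τ → MvPowerSeries σ ℚ} (hu : ∀ i, Ordc 1 (u i)) (n : τ →₀ ℕ) :
    Ordc (mdeg n) (n.prod fun i k => u i ^ k) := by
  induction n using Finsupp.induction with
  | zero => rw [Finsupp.prod_zero_index, mdeg_zero]; exact ordc_one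
  | single_add a b f _ _ ih =>
      rw [prod_pow_add, mdeg_add, mdeg_single]
      exact ordc_mul (ordc_pow (hu a) b) ih

lemma homo_prod {w : σ → ℤ} {wt : τ → ℤ} {u : τ → MvPowerSeries σ ℚ}
    (hu : ∀ i, Homo w (wt i) (u i)) (n : τ →₀ ℕ) :
    Homo w (wdeg wt n) (n.prod fun i k => u i ^ k) := by
  induction n using Finsupp.induction with
  | zero => rw [Finsupp.prod_zero_index, wdeg_zero]; exact homo_one w
  | single_add a b f _ _ ih =>
      rw [prod_pow_add, wdeg_add, wdeg_single, mul_comm (wt a) (b : ℤ)]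
      exact homo_mul (homo_pow (hu a) b) ih


/-! ### the specific series -/

def E : MvPowerSeries (Unit ⊕ ℕ) ℚ := fexp expArg

def emb (n : ℕ →₀ ℕ) : (Unit ⊕ ℕ) →₀ ℕ := Finsupp.mapDomain Sum.inr n

def wS : Unit ⊕ ℕ → ℤ := Sum.elim (fun _ => 0) fun a => (a : ℤ)

def wT : Unit ⊕ ℕ → ℤ := Sum.elim (fun _ => 1) fun a => -(a : ℤ)

def wC : Unit ⊕ ℕ → ℤ := Sum.elim (fun _ => 0) fun _ => 1

def nwt (n : ℕ →₀ ℕ) : ℤ := wdeg (fun a : ℕ => (a : ℤ)) n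

lemma res_apply (μ : (Unit ⊕ ℕ) →₀ ℕ) (a : ℕ) : res μ a = μ (Sum.inr a) := rfl

lemma emb_apply_inr (n : ℕ →₀ ℕ) (a : ℕ) : emb n (Sum.inr a) = n a :=
  Finsupp.mapDomain_apply Sum.inr_injective _ _

lemma emb_apply_inl (n : ℕ →₀ ℕ) : emb n (Sum.inl ()) = 0 :=
  Finsupp.mapDomain_notin_range _ _ (by simp)

lemma res_emb (n : ℕ →₀ ℕ) : res (emb n) = n := by
  ext a; rw [res_apply, emb_apply_inr]

lemma emb_res {μ : (Unit ⊕ ℕ) →₀ ℕ} (h : μ (Sum.inl ()) = 0) : emb (res μ) = μ := by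
  ext i
  cases i with
  | inl u => cases u; rw [emb_apply_inl, h]
  | inr a => rw [emb_apply_inr, res_apply]

lemma emb_add (m n : ℕ →₀ ℕ) : emb (m + n) = emb m + emb n := Finsupp.mapDomain_add

lemma emb_single (a k : ℕ) : emb (Finsupp.single a k) = Finsupp.single (Sum.inr a) k :=
  Finsupp.mapDomain_single

@[simp] lemma emb_zero : emb 0 = 0 := Finsupp.mapDomain_zero

lemma res_add (μ ν : (Unit ⊕ ℕ) →₀ ℕ) : res (μ + ν) = res μ + res ν := by
  ext a; simp [res_apply]

lemma res_single_inr (a k : ℕ) :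
    res (Finsupp.single (Sum.inr a : Unit ⊕ ℕ) k) = Finsupp.single a k := by
  ext b
  rw [res_apply]
  simp [Finsupp.single_apply]

lemma res_single_inl (j : ℕ) : res (Finsupp.single (Sum.inl () : Unit ⊕ ℕ) j) = 0 := by
  ext b
  rw [res_apply]
  simp [Finsupp.single_apply]

lemma wdeg_emb (w : Unit ⊕ ℕ → ℤ) (n : ℕ →₀ ℕ) :
    wdeg w (emb n) = n.sum fun a k => w (Sum.inr a) * k :=
  Finsupp.sum_mapDomain_index (by simp) (by intros; push_cast; ring)

lemma wdeg_wT_emb (n : ℕ →₀ ℕ) : wdeg wT (emb n) = -nwt n := by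
  rw [wdeg_emb]
  unfold nwt wdeg
  rw [Finsupp.sum, Finsupp.sum, ← Finset.sum_neg_distrib]
  refine Finset.sum_congr rfl fun a _ => ?_
  show wT (Sum.inr a) * (n a : ℤ) = -((a : ℤ) * n a)
  simp [wT]

lemma wdeg_wS_emb (n : ℕ →₀ ℕ) : wdeg wS (emb n) = nwt n := by
  rw [wdeg_emb]
  rfl

lemma wdeg_wS_of_inl_eq_zero {μ : (Unit ⊕ ℕ) →₀ ℕ} (h : μ (Sum.inl ()) = 0) :
    wdeg wS μ = nwt (res μ) := by
  conv_lhs => rw [← emb_res h]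
  rw [wdeg_wS_emb]

/-! ### coefficients of `expArg` -/

lemma pair_apply_inr (b x : ℕ) :
    ((Finsupp.single (Sum.inl () : Unit ⊕ ℕ) b + Finsupp.single (Sum.inr b : Unit ⊕ ℕ) 1 :
      (Unit ⊕ ℕ) →₀ ℕ)) (Sum.inr x) = if b = x then 1 else 0 := by
  rw [Finsupp.add_apply, Finsupp.single_apply, Finsupp.single_apply]
  simp [Sum.inr.injEq]

lemma coeff_expArg (μ : (Unit ⊕ ℕ) →₀ ℕ) :
    MvPowerSeries.coeff μ expArg =
      if ∃ b : ℕ, μ = Finsupp.single (Sum.inl ()) b + Finsupp.single (Sum.inr b) 1 then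
        (-1 : ℚ) else 0 := by
  show (∑ᶠ a : ℕ, if μ = Finsupp.single (Sum.inl ()) a + Finsupp.single (Sum.inr a) 1
    then (-1 : ℚ) else 0) = _
  split_ifs with h
  · obtain ⟨b, hb⟩ := h
    rw [finsum_eq_single _ b (fun x hx => ?_), if_pos hb]
    rw [if_neg]
    intro hx'
    apply hx
    have heq := hb.symm.trans hx'
    have := DFunLike.congr_fun heq (Sum.inr x)
    rw [pair_apply_inr, pair_apply_inr] at this
    simp only [if_pos rfl] at this
    by_contra hbx
    rw [if_neg fun hc => hbx hc.symm] at this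
    exact absurd this (by norm_num)
  · exact finsum_eq_zero_of_forall_eq_zero fun x => if_neg fun hx => h ⟨x, hx⟩

lemma homo_expArg_T : Homo wT 0 expArg := by
  intro μ hμ
  rw [coeff_expArg] at hμ
  split_ifs at hμ with h
  · obtain ⟨b, rfl⟩ := h
    rw [wdeg_add, wdeg_single, wdeg_single]
    show (1 : ℤ) * b + (-(b : ℤ)) * 1 = 0
    ring
  · exact absurd rfl hμ

lemma homo_expArg_C : Homo wC 1 expArg := by
  intro μ hμ
  rw [coeff_expArg] at hμ
  split_ifs at hμ with h
  · obtain ⟨b, rfl⟩ := h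
    rw [wdeg_add, wdeg_single, wdeg_single]
    show (0 : ℤ) * b + 1 * 1 = 1
    ring
  · exact absurd rfl hμ

lemma ordc_expArg : Ordc 1 expArg := by
  intro m hm
  have hm0 : m = 0 := mdeg_eq_zero (by omega)
  subst hm0
  rw [coeff_expArg, if_neg]
  rintro ⟨b, hb⟩
  have := DFunLike.congr_fun hb (Sum.inr b)
  rw [pair_apply_inr, if_pos rfl] at this
  simp at this

/-! ### coefficients of `E` -/

lemma coeff_E (μ : (Unit ⊕ ℕ) →₀ ℕ) :
    MvPowerSeries.coeff μ E =
      ∑ k ∈ Finset.range (mdeg μ + 1),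
        ((k.factorial : ℚ))⁻¹ * MvPowerSeries.coeff μ (expArg ^ k) := by
  show (∑ k ∈ Finset.range (mdeg μ + 1),
    (k.factorial : ℚ)⁻¹ • MvPowerSeries.coeff μ (expArg ^ k)) = _
  simp [smul_eq_mul]

lemma E_homo_T {μ : (Unit ⊕ ℕ) →₀ ℕ} (h : MvPowerSeries.coeff μ E ≠ 0) :
    wdeg wT μ = 0 := by
  by_contra hne
  apply h
  rw [coeff_E]
  refine Finset.sum_eq_zero fun k _ => ?_
  have : MvPowerSeries.coeff μ (expArg ^ k) = 0 := by
    by_contra h2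
    have := homo_pow homo_expArg_T k μ h2
    rw [mul_zero] at this
    exact hne this
  rw [this, mul_zero]

lemma E_single (j : ℕ) :
    MvPowerSeries.coeff (Finsupp.single (Sum.inl () : Unit ⊕ ℕ) j) E
      = if j = 0 then 1 else 0 := by
  rw [coeff_E]
  have hw : wdeg wC (Finsupp.single (Sum.inl () : Unit ⊕ ℕ) j) = 0 := by
    rw [wdeg_single]
    show (0 : ℤ) * j = 0
    ring
  rw [Finset.sum_eq_single 0]
  · rw [pow_zero, MvPowerSeries.coeff_one]
    simp [Finsupp.single_eq_zero]
  · intro k _ hk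
    have : MvPowerSeries.coeff (Finsupp.single (Sum.inl () : Unit ⊕ ℕ) j) (expArg ^ k) = 0 := by
      by_contra h2
      have := homo_pow homo_expArg_C k _ h2
      rw [mul_one, hw] at this
      exact hk (by exact_mod_cast this.symm)
    rw [this, mul_zero]
  · intro h0
    exact absurd (Finset.mem_range.mpr (by omega)) h0

lemma E_zero : MvPowerSeries.coeff (0 : (Unit ⊕ ℕ) →₀ ℕ) E = 1 := by
  have := E_single 0
  rw [Finsupp.single_zero] at this
  rw [this, if_pos rfl]

/-! ### derivative identities for `E` -/

lemma pd_expArg (b : ℕ) :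
    pd (Sum.inr b : Unit ⊕ ℕ) expArg
      = -(MvPowerSeries.monomial (Finsupp.single (Sum.inl ()) b) 1) := by
  apply MvPowerSeries.ext
  intro m
  rw [coeff_pd, map_neg, MvPowerSeries.coeff_monomial, coeff_expArg]
  rcases eq_or_ne m (Finsupp.single (Sum.inl () : Unit ⊕ ℕ) b) with h | h
  · subst h
    rw [if_pos ⟨b, rfl⟩, if_pos rfl]
    have : (Finsupp.single (Sum.inl () : Unit ⊕ ℕ) b) (Sum.inr b) = 0 := by
      simp [Finsupp.single_apply]
    rw [this]
    norm_num
  · rw [if_neg, if_neg h, mul_zero, neg_zero]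
    rintro ⟨x, hx⟩
    rcases eq_or_ne x b with hxb | hxb
    · subst hxb
      apply h
      exact add_right_cancel (hx.trans rfl)
    · have := DFunLike.congr_fun hx (Sum.inr b)
      rw [pair_apply_inr] at this
      · -- LHS : (m + single (inr b) 1) (inr b) = m (inr b) + 1
        rw [Finsupp.add_apply, Finsupp.single_eq_same] at this
        rw [if_neg hxb] at this
        omega
  
lemma pd_expArg_shift {b : ℕ} (hb : 1 ≤ b) :
    pd (Sum.inr b : Unit ⊕ ℕ) expArg
      = MvPowerSeries.X (Sum.inl ()) * pd (Sum.inr (b - 1)) expArg := by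
  rw [pd_expArg, pd_expArg, mul_neg]
  congr 1
  have hX : (MvPowerSeries.X (Sum.inl ()) : MvPowerSeries (Unit ⊕ ℕ) ℚ)
      = MvPowerSeries.monomial (Finsupp.single (Sum.inl ()) 1) 1 := rfl
  have hs : Finsupp.single (Sum.inl () : Unit ⊕ ℕ) 1 + Finsupp.single (Sum.inl ()) (b - 1)
      = Finsupp.single (Sum.inl ()) b := by
    rw [← Finsupp.single_add]
    congr 1
    omega
  rw [hX, MvPowerSeries.monomial_mul_monomial, one_mul, hs]

lemma pd_pow_expArg (k : ℕ) {b : ℕ} (hb : 1 ≤ b) :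
    pd (Sum.inr b : Unit ⊕ ℕ) (expArg ^ k)
      = MvPowerSeries.X (Sum.inl ()) * pd (Sum.inr (b - 1)) (expArg ^ k) := by
  induction k with
  | zero => rw [pow_zero, pd_one, pd_one, mul_zero]
  | succ k ih =>
      rw [pow_succ, pd_mul, pd_mul, ih, pd_expArg_shift hb, mul_add]
      ring

lemma coeff_X_mul {σ : Type*} (i : σ) (g : MvPowerSeries σ ℚ) (m : σ →₀ ℕ) :
    MvPowerSeries.coeff m (MvPowerSeries.X i * g)
      = if Finsupp.single i 1 ≤ m then
          MvPowerSeries.coeff (m - Finsupp.single i 1) g else 0 := by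
  have hX : (MvPowerSeries.X i : MvPowerSeries σ ℚ)
      = MvPowerSeries.monomial (Finsupp.single i 1) 1 := rfl
  rw [hX, MvPowerSeries.coeff_monomial_mul]
  split_ifs with h
  · rw [one_mul]
  · rfl

lemma mdeg_tsub {σ : Type*} {i : σ} {m : σ →₀ ℕ} (h : Finsupp.single i 1 ≤ m) :
    mdeg (m - Finsupp.single i 1) + 1 = mdeg m := by
  have h2 : m - Finsupp.single i 1 + Finsupp.single i 1 = m := tsub_add_cancel_of_le h
  calc mdeg (m - Finsupp.single i 1) + 1
      = mdeg (m - Finsupp.single i 1 + Finsupp.single i 1) := by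
        rw [mdeg_add, mdeg_single]
    _ = mdeg m := by rw [h2]

lemma pd_E_shift {a : ℕ} (ha : 1 ≤ a) :
    pd (Sum.inr a : Unit ⊕ ℕ) E = MvPowerSeries.X (Sum.inl ()) * pd (Sum.inr (a - 1)) E := by
  apply MvPowerSeries.ext
  intro m
  rw [coeff_pd, coeff_X_mul]
  have hL : MvPowerSeries.coeff (m + Finsupp.single (Sum.inr a : Unit ⊕ ℕ) 1) E
      = ∑ k ∈ Finset.range (mdeg m + 2),
          (k.factorial : ℚ)⁻¹ *
            MvPowerSeries.coeff (m + Finsupp.single (Sum.inr a) 1) (expArg ^ k) := by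
    rw [coeff_E, mdeg_add, mdeg_single]
  rw [hL, Finset.mul_sum]
  have hterm : ∀ k,
      ((m (Sum.inr a) + 1 : ℕ) : ℚ) * ((k.factorial : ℚ)⁻¹ *
        MvPowerSeries.coeff (m + Finsupp.single (Sum.inr a) 1) (expArg ^ k))
      = (k.factorial : ℚ)⁻¹ *
          (if Finsupp.single (Sum.inl () : Unit ⊕ ℕ) 1 ≤ m then
            MvPowerSeries.coeff (m - Finsupp.single (Sum.inl ()) 1)
              (pd (Sum.inr (a - 1)) (expArg ^ k)) else 0) := by
    intro k
    have h1 : ((m (Sum.inr a) + 1 : ℕ) : ℚ) *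
        MvPowerSeries.coeff (m + Finsupp.single (Sum.inr a) 1) (expArg ^ k)
        = MvPowerSeries.coeff m (pd (Sum.inr a) (expArg ^ k)) := (coeff_pd _ _ _).symm
    calc ((m (Sum.inr a) + 1 : ℕ) : ℚ) * ((k.factorial : ℚ)⁻¹ *
        MvPowerSeries.coeff (m + Finsupp.single (Sum.inr a) 1) (expArg ^ k))
        = (k.factorial : ℚ)⁻¹ * (((m (Sum.inr a) + 1 : ℕ) : ℚ) *
            MvPowerSeries.coeff (m + Finsupp.single (Sum.inr a) 1) (expArg ^ k)) := by ring
      _ = (k.factorial : ℚ)⁻¹ *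
            MvPowerSeries.coeff m (pd (Sum.inr a) (expArg ^ k)) := by rw [h1]
      _ = _ := by rw [pd_pow_expArg k ha, coeff_X_mul]
  rw [Finset.sum_congr rfl fun k _ => hterm k]
  split_ifs with h
  · -- single (inl()) 1 ≤ m
    have hR : MvPowerSeries.coeff (m - Finsupp.single (Sum.inl () : Unit ⊕ ℕ) 1)
        (pd (Sum.inr (a - 1)) E)
        = ∑ k ∈ Finset.range (mdeg m + 1),
            (k.factorial : ℚ)⁻¹ *
              MvPowerSeries.coeff (m - Finsupp.single (Sum.inl ()) 1)
                (pd (Sum.inr (a - 1)) (expArg ^ k)) := by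
      rw [coeff_pd, coeff_E, mdeg_add, mdeg_single, mdeg_tsub h, Finset.mul_sum]
      refine Finset.sum_congr rfl fun k _ => ?_
      rw [coeff_pd]
      ring
    rw [hR]
    have hzero : (Nat.factorial (mdeg m + 1) : ℚ)⁻¹ *
        MvPowerSeries.coeff (m - Finsupp.single (Sum.inl () : Unit ⊕ ℕ) 1)
          (pd (Sum.inr (a - 1)) (expArg ^ (mdeg m + 1))) = 0 := by
      have : MvPowerSeries.coeff (m - Finsupp.single (Sum.inl () : Unit ⊕ ℕ) 1)
          (pd (Sum.inr (a - 1)) (expArg ^ (mdeg m + 1))) = 0 := by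
        rw [coeff_pd]
        have hdeg : mdeg ((m - Finsupp.single (Sum.inl () : Unit ⊕ ℕ) 1)
            + Finsupp.single (Sum.inr (a - 1)) 1) < mdeg m + 1 := by
          rw [mdeg_add, mdeg_single]
          have := mdeg_tsub h
          omega
        rw [ordc_pow ordc_expArg (mdeg m + 1) _ hdeg, mul_zero]
      rw [this, mul_zero]
    rw [show mdeg m + 2 = (mdeg m + 1) + 1 from rfl, Finset.sum_range_succ, hzero, add_zero]
  · exact Finset.sum_eq_zero fun k _ => by rw [mul_zero]


/-! ### coefficients of `t` and `chg t` -/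

section WithT

variable {t : ℕ → MvPowerSeries ℕ ℚ}

@[simp] lemma res_zero : res (0 : (Unit ⊕ ℕ) →₀ ℕ) = 0 := by
  ext a
  rw [res_apply]
  rfl

lemma coeff_t (ht : DefIdent t) (j : ℕ) (n : ℕ →₀ ℕ) :
    MvPowerSeries.coeff n (t (j + 1))
      = (if j = 0 ∧ n = 0 then 1 else 0)
        - MvPowerSeries.coeff (Finsupp.single (Sum.inl ()) j + emb n) E := by
  set μ : (Unit ⊕ ℕ) →₀ ℕ := Finsupp.single (Sum.inl ()) j + emb n with hμ
  have hres : res μ = n := by rw [hμ, res_add, res_single_inl, res_emb, zero_add]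
  have hinl : μ (Sum.inl ()) = j := by
    rw [hμ, Finsupp.add_apply, Finsupp.single_eq_same, emb_apply_inl, add_zero]
  have hzero : (μ = 0) ↔ (j = 0 ∧ n = 0) := by
    constructor
    · intro h0
      constructor
      · rw [← hinl, h0]; rfl
      · rw [← hres, h0]; exact res_zero
    · rintro ⟨rfl, rfl⟩
      rw [hμ, emb_zero, add_zero, Finsupp.single_zero]
  have h0 : genT t μ = fexp expArg μ := congrFun ht μ
  simp only [genT] at h0
  rw [apply_eq_coeff (fexp expArg) μ, show fexp expArg = E from rfl] at h0
  have h := h0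
  rw [hres, hinl] at h
  simp only [hzero] at h
  linarith [h]

lemma prodX (n : ℕ →₀ ℕ) :
    (n.prod fun a k => (MvPowerSeries.X (Sum.inr a) : MvPowerSeries (Unit ⊕ ℕ) ℚ) ^ k)
      = MvPowerSeries.monomial (emb n) 1 := by
  induction n using Finsupp.induction with
  | zero => rw [Finsupp.prod_zero_index, emb_zero, MvPowerSeries.monomial_zero_one]
  | single_add a b f _ _ ih =>
      rw [prod_pow_add, ih, MvPowerSeries.X_pow_eq, MvPowerSeries.monomial_mul_monomial,
        one_mul, emb_add, emb_single]

lemma coeff_u_inr (j : ℕ) (m : (Unit ⊕ ℕ) →₀ ℕ) :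
    MvPowerSeries.coeff m (chg t (Sum.inr j))
      = if m (Sum.inl ()) = 0 then MvPowerSeries.coeff (res m) (t (j + 1)) else 0 := by
  have hc : chg t (Sum.inr j) = subst (t (j + 1)) (fun a => MvPowerSeries.X (Sum.inr a)) := rfl
  rw [hc]
  show (∑ᶠ n : ℕ →₀ ℕ, MvPowerSeries.coeff n (t (j + 1)) *
    MvPowerSeries.coeff m (n.prod fun a k => MvPowerSeries.X (Sum.inr a) ^ k)) = _
  rw [finsum_congr (fun n => by
    rw [prodX n, MvPowerSeries.coeff_monomial])]
  split_ifs with h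
  · rw [finsum_eq_single _ (res m) (fun x hx => ?_)]
    · rw [if_pos (emb_res h).symm, mul_one]
    · rw [if_neg, mul_zero]
      intro hx'
      apply hx
      rw [hx', res_emb]
  · refine finsum_eq_zero_of_forall_eq_zero fun x => ?_
    rw [if_neg, mul_zero]
    intro hx'
    apply h
    rw [hx', emb_apply_inl]

lemma u_ord (ht : DefIdent t) : ∀ i, Ordc 1 (chg t i) := by
  intro i
  cases i with
  | inl u =>
      cases u
      intro m hm
      rw [mdeg_eq_zero (by omega : mdeg m = 0)]
      exact MvPowerSeries.coeff_zero_X (Sum.inl ())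
  | inr j =>
      intro m hm
      rw [mdeg_eq_zero (by omega : mdeg m = 0)]
      have hz : ((0 : (Unit ⊕ ℕ) →₀ ℕ)) (Sum.inl ()) = 0 := rfl
      rw [coeff_u_inr, if_pos hz]
      rw [res_zero, coeff_t ht, emb_zero, add_zero, E_single]
      by_cases hj : j = 0 <;> simp [hj]

lemma u_homo (ht : DefIdent t) : ∀ i, Homo wS (wS i) (chg t i) := by
  intro i
  cases i with
  | inl u =>
      cases u
      intro m hm
      rw [show chg t (Sum.inl PUnit.unit) = MvPowerSeries.X (Sum.inl ()) from rfl,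
        MvPowerSeries.coeff_X] at hm
      split_ifs at hm with h
      · rw [h, wdeg_single]
        show wS (Sum.inl ()) * 1 = wS (Sum.inl ())
        ring
      · exact absurd rfl hm
  | inr j =>
      intro m hm
      rw [coeff_u_inr] at hm
      split_ifs at hm with h
      · rw [coeff_t ht] at hm
        show wdeg wS m = (j : ℤ)
        rw [wdeg_wS_of_inl_eq_zero h]
        by_cases hc : j = 0 ∧ res m = 0
        · rw [hc.2, hc.1]
          simp [nwt]
        · rw [if_neg hc, zero_sub, neg_ne_zero] at hm
          have hT := E_homo_T hm
          rw [wdeg_add, wdeg_single, wdeg_wT_emb] at hT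
          have : (1 : ℤ) * j + -nwt (res m) = 0 := by
            convert hT using 2
            simp [wT]
          linarith [this]
      · exact absurd rfl hm

/-! ### the key identities for `∂t_{j+1}/∂s_a` -/

lemma coeff_pd_u (ht : DefIdent t) (j a : ℕ) (m : (Unit ⊕ ℕ) →₀ ℕ) :
    MvPowerSeries.coeff m (pd (Sum.inr a) (chg t (Sum.inr j)))
      = if m (Sum.inl ()) = 0 then
          ((m (Sum.inr a) + 1 : ℕ) : ℚ) *
            MvPowerSeries.coeff (res m + Finsupp.single a 1) (t (j + 1))
        else 0 := by
  rw [coeff_pd, coeff_u_inr]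
  have h1 : ((m + Finsupp.single (Sum.inr a : Unit ⊕ ℕ) 1 : (Unit ⊕ ℕ) →₀ ℕ)) (Sum.inl ())
      = m (Sum.inl ()) := by
    rw [Finsupp.add_apply, Finsupp.single_eq_of_ne (by simp), add_zero]
  have h2 : res (m + Finsupp.single (Sum.inr a : Unit ⊕ ℕ) 1) = res m + Finsupp.single a 1 := by
    rw [res_add, res_single_inr]
  rw [h1, h2]
  split_ifs with h
  · rfl
  · rw [mul_zero]

lemma nsingle_ne_zero (m : (Unit ⊕ ℕ) →₀ ℕ) (a : ℕ) :
    res m + Finsupp.single a 1 ≠ 0 := by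
  intro h0
  have := DFunLike.congr_fun h0 a
  rw [Finsupp.add_apply, Finsupp.single_eq_same] at this
  simp at this

lemma V_zero (ht : DefIdent t) {a : ℕ} (ha : 1 ≤ a) : pd (Sum.inr a : Unit ⊕ ℕ) (chg t (Sum.inr 0)) = 0 := by
  apply MvPowerSeries.ext
  intro m
  rw [coeff_pd_u ht, map_zero]
  split_ifs with h
  · rw [coeff_t ht, if_neg (fun hc => nsingle_ne_zero m a hc.2), Finsupp.single_zero, zero_add,
      zero_sub]
    have hE : MvPowerSeries.coeff (emb (res m + Finsupp.single a 1)) E = 0 := by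
      have hs := congrArg (MvPowerSeries.coeff (emb (res m))) (pd_E_shift ha)
      rw [coeff_pd, coeff_X_mul, if_neg (by
        rw [Finsupp.single_le_iff, emb_apply_inl]
        omega)] at hs
      have hne : ((emb (res m) (Sum.inr a) + 1 : ℕ) : ℚ) ≠ 0 :=
        Nat.cast_ne_zero.mpr (Nat.succ_ne_zero _)
      have := mul_eq_zero.mp hs
      rcases this with h' | h'
      · exact absurd h' hne
      · rw [emb_add, emb_single]
        exact h'
    rw [hE, neg_zero, mul_zero]
  · rfl

lemma V_shift (ht : DefIdent t) {a : ℕ} (ha : 1 ≤ a) (j : ℕ) :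
    pd (Sum.inr a : Unit ⊕ ℕ) (chg t (Sum.inr (j + 1)))
      = pd (Sum.inr (a - 1)) (chg t (Sum.inr j)) := by
  apply MvPowerSeries.ext
  intro m
  rw [coeff_pd_u ht, coeff_pd_u ht]
  split_ifs with h
  swap
  · rfl
  rw [coeff_t ht, coeff_t ht, if_neg (by simp), if_neg (fun hc => nsingle_ne_zero m (a-1) hc.2),
    zero_sub, zero_sub]
  set μ : (Unit ⊕ ℕ) →₀ ℕ := Finsupp.single (Sum.inl ()) (j + 1) + emb (res m) with hμ
  set μ₂ : (Unit ⊕ ℕ) →₀ ℕ := Finsupp.single (Sum.inl ()) j + emb (res m) with hμ₂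
  have hsplit : μ = Finsupp.single (Sum.inl ()) 1 + μ₂ := by
    rw [hμ, hμ₂, ← add_assoc, ← Finsupp.single_add, add_comm 1 j]
  have hμa : μ (Sum.inr a) = m (Sum.inr a) := by
    rw [hμ, Finsupp.add_apply, Finsupp.single_eq_of_ne (by simp), emb_apply_inr, res_apply,
      zero_add]
  have hμ₂a : μ₂ (Sum.inr (a - 1)) = m (Sum.inr (a - 1)) := by
    rw [hμ₂, Finsupp.add_apply, Finsupp.single_eq_of_ne (by simp), emb_apply_inr, res_apply,
      zero_add]
  have hle : Finsupp.single (Sum.inl () : Unit ⊕ ℕ) 1 ≤ μ := by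
    rw [hsplit]
    exact le_add_of_nonneg_right (zero_le)
  have hsub : μ - Finsupp.single (Sum.inl ()) 1 = μ₂ := by
    rw [hsplit, add_tsub_cancel_left]
  have key := congrArg (MvPowerSeries.coeff μ) (pd_E_shift ha)
  rw [coeff_pd, coeff_X_mul, if_pos hle, hsub, coeff_pd] at key
  have e1 : μ + Finsupp.single (Sum.inr a : Unit ⊕ ℕ) 1
      = Finsupp.single (Sum.inl ()) (j + 1) + emb (res m + Finsupp.single a 1) := by
    rw [emb_add, emb_single, hμ, add_assoc]
  have e2 : μ₂ + Finsupp.single (Sum.inr (a - 1) : Unit ⊕ ℕ) 1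
      = Finsupp.single (Sum.inl ()) j + emb (res m + Finsupp.single (a - 1) 1) := by
    rw [emb_add, emb_single, hμ₂, add_assoc]
  rw [e1, e2, hμa, hμ₂a] at key
  rw [mul_neg, mul_neg, neg_inj]
  exact key


/-! ### substitution: supports and ring-homomorphism properties -/

/-- coefficient of the product of powers of the substituted series -/
def CC (t : ℕ → MvPowerSeries ℕ ℚ) (m n : (Unit ⊕ ℕ) →₀ ℕ) : ℚ :=
  MvPowerSeries.coeff m (n.prod fun i k => chg t i ^ k)

lemma coeff_subst (F : MvPowerSeries (Unit ⊕ ℕ) ℚ) (m : (Unit ⊕ ℕ) →₀ ℕ) :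
    MvPowerSeries.coeff m (subst F (chg t))
      = ∑ᶠ n : (Unit ⊕ ℕ) →₀ ℕ, MvPowerSeries.coeff n F * CC t m n := rfl

lemma wS_nonneg : ∀ i, 0 ≤ wS i := by
  rintro (u | a) <;> simp [wS]

/-- the variable set used for the support bound -/
def vset (m : (Unit ⊕ ℕ) →₀ ℕ) : Finset (Unit ⊕ ℕ) :=
  insert (Sum.inl ()) ((Finset.range ((wdeg wS m).toNat + 1)).image Sum.inr)

/-- the monomial bound -/
def NN (m : (Unit ⊕ ℕ) →₀ ℕ) : (Unit ⊕ ℕ) →₀ ℕ :=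
  ∑ i ∈ vset m, Finsupp.single i (mdeg m)

/-- the finite set of `F`-side monomials relevant for the coefficient of `m` -/
def BB (m : (Unit ⊕ ℕ) →₀ ℕ) : Finset ((Unit ⊕ ℕ) →₀ ℕ) := Finset.Icc 0 (NN m)

lemma NN_apply_mem {m : (Unit ⊕ ℕ) →₀ ℕ} {i : Unit ⊕ ℕ} (h : i ∈ vset m) :
    NN m i = mdeg m := by
  unfold NN
  rw [Finsupp.finset_sum_apply]
  rw [Finset.sum_eq_single i (fun j _ hji => Finsupp.single_eq_of_ne hji.symm)
    (fun hi => absurd h hi)]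
  exact Finsupp.single_eq_same

lemma C_support (ht : DefIdent t) {p m n : (Unit ⊕ ℕ) →₀ ℕ} (hpm : p ≤ m)
    (h : CC t p n ≠ 0) : n ∈ BB m := by
  have hmdeg : mdeg n ≤ mdeg m := by
    rcases Nat.lt_or_ge (mdeg p) (mdeg n) with hlt | hge
    · exact absurd (ordc_prod (u_ord ht) n p hlt) h
    · exact le_trans hge (mdeg_mono hpm)
  have hw : wdeg wS p = wdeg wS n := homo_prod (u_homo ht) n p h
  have hwn : wdeg wS n ≤ wdeg wS m := hw ▸ wdeg_mono wS_nonneg hpm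
  rw [BB, Finset.mem_Icc]
  refine ⟨zero_le, ?_⟩
  rw [Finsupp.le_def]
  intro i
  by_cases hv : i ∈ vset m
  · rw [NN_apply_mem hv]
    exact le_trans (le_mdeg n i) hmdeg
  · -- i ∉ vset m : then n i = 0
    have hni : n i = 0 := by
      by_contra hne
      -- i must be inr b with b > (wdeg wS m).toNat
      rcases i with u | b
      · exact hv (Finset.mem_insert_self _ _)
      · have hb : (b : ℤ) ≤ wdeg wS n := by
          have := le_wdeg wS_nonneg n (Sum.inr b)
          have hws : wS (Sum.inr b) = (b : ℤ) := rfl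
          rw [hws] at this
          have h1 : (1 : ℤ) ≤ (n (Sum.inr b) : ℤ) := by exact_mod_cast Nat.one_le_iff_ne_zero.mpr hne
          nlinarith [this]
        have hbig : b < (wdeg wS m).toNat + 1 := by
          have := le_trans hb hwn
          omega
        exact hv (Finset.mem_insert_of_mem
          (Finset.mem_image.mpr ⟨b, Finset.mem_range.mpr hbig, rfl⟩))
    rw [hni]
    exact Nat.zero_le _

lemma subst_eq_sum (ht : DefIdent t) (F : MvPowerSeries (Unit ⊕ ℕ) ℚ)
    {p m : (Unit ⊕ ℕ) →₀ ℕ} (hpm : p ≤ m) :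
    MvPowerSeries.coeff p (subst F (chg t))
      = ∑ n ∈ BB m, MvPowerSeries.coeff n F * CC t p n := by
  rw [coeff_subst]
  refine finsum_eq_sum_of_support_subset _ fun n hn => ?_
  have : CC t p n ≠ 0 := fun h0 => hn (by
    show MvPowerSeries.coeff n F * CC t p n = 0
    rw [h0, mul_zero])
  exact C_support ht hpm this

lemma subst_add (ht : DefIdent t) (F G : MvPowerSeries (Unit ⊕ ℕ) ℚ) :
    subst (F + G) (chg t) = subst F (chg t) + subst G (chg t) := by
  apply MvPowerSeries.ext
  intro m
  rw [map_add, subst_eq_sum ht (F + G) (le_refl m), subst_eq_sum ht F (le_refl m),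
    subst_eq_sum ht G (le_refl m), ← Finset.sum_add_distrib]
  refine Finset.sum_congr rfl fun n _ => ?_
  rw [map_add]
  ring

lemma subst_smul (ht : DefIdent t) (c : ℚ) (F : MvPowerSeries (Unit ⊕ ℕ) ℚ) :
    subst (c • F) (chg t) = c • subst F (chg t) := by
  apply MvPowerSeries.ext
  intro m
  rw [MvPowerSeries.coeff_smul, subst_eq_sum ht (c • F) (le_refl m),
    subst_eq_sum ht F (le_refl m), Finset.mul_sum]
  refine Finset.sum_congr rfl fun n _ => ?_
  rw [MvPowerSeries.coeff_smul]
  ring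

lemma prod_pow_add_split (n1 n2 : (Unit ⊕ ℕ) →₀ ℕ) :
    ((n1 + n2).prod fun i k => chg t i ^ k)
      = (n1.prod fun i k => chg t i ^ k) * (n2.prod fun i k => chg t i ^ k) :=
  Finsupp.prod_add_index' (fun i => pow_zero _) (fun i b c => pow_add _ _ _)

lemma CC_antidiagonal (m n1 n2 : (Unit ⊕ ℕ) →₀ ℕ) :
    CC t m (n1 + n2) = (Finset.HasAntidiagonal.antidiagonal m).sum
      (fun pq : ((Unit ⊕ ℕ) →₀ ℕ) × ((Unit ⊕ ℕ) →₀ ℕ) => CC t pq.1 n1 * CC t pq.2 n2) := by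
  unfold CC
  rw [prod_pow_add_split, MvPowerSeries.coeff_mul]

lemma subst_mul (ht : DefIdent t) (F G : MvPowerSeries (Unit ⊕ ℕ) ℚ) :
    subst (F * G) (chg t) = subst F (chg t) * subst G (chg t) := by
  apply MvPowerSeries.ext
  intro m
  rw [MvPowerSeries.coeff_mul, subst_eq_sum ht (F * G) (le_refl m)]
  have rhs : (Finset.HasAntidiagonal.antidiagonal m).sum
      (fun pq : ((Unit ⊕ ℕ) →₀ ℕ) × ((Unit ⊕ ℕ) →₀ ℕ) =>
        MvPowerSeries.coeff pq.1 (subst F (chg t)) *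
          MvPowerSeries.coeff pq.2 (subst G (chg t)))
      = ∑ n1 ∈ BB m, ∑ n2 ∈ BB m,
          (MvPowerSeries.coeff n1 F * MvPowerSeries.coeff n2 G) * CC t m (n1 + n2) := by
    have step1 : ∀ pq ∈ Finset.HasAntidiagonal.antidiagonal m,
        MvPowerSeries.coeff (pq : ((Unit ⊕ ℕ) →₀ ℕ) × ((Unit ⊕ ℕ) →₀ ℕ)).1
            (subst F (chg t)) * MvPowerSeries.coeff pq.2 (subst G (chg t))
          = ∑ n1 ∈ BB m, ∑ n2 ∈ BB m,
              (MvPowerSeries.coeff n1 F * CC t pq.1 n1) *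
                (MvPowerSeries.coeff n2 G * CC t pq.2 n2) := by
      intro pq hpq
      have hmem := Finset.HasAntidiagonal.mem_antidiagonal.mp hpq
      have h1 : pq.1 ≤ m := hmem ▸ self_le_add_right _ _
      have h2 : pq.2 ≤ m := hmem ▸ (self_le_add_right pq.2 pq.1).trans (by rw [add_comm])
      rw [subst_eq_sum ht F h1, subst_eq_sum ht G h2, Finset.sum_mul_sum]
    rw [Finset.sum_congr rfl step1, Finset.sum_comm]
    refine Finset.sum_congr rfl fun n1 _ => ?_
    rw [Finset.sum_comm]
    refine Finset.sum_congr rfl fun n2 _ => ?_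
    rw [CC_antidiagonal, Finset.mul_sum]
    refine Finset.sum_congr rfl fun pq _ => ?_
    ring
  rw [rhs]
  -- LHS : ∑ n ∈ BB m, coeff n (F*G) * CC t m n
  have lhs : ∑ n ∈ BB m, MvPowerSeries.coeff n (F * G) * CC t m n
      = ∑ n ∈ BB m, (Finset.HasAntidiagonal.antidiagonal n).sum
          (fun nn : ((Unit ⊕ ℕ) →₀ ℕ) × ((Unit ⊕ ℕ) →₀ ℕ) =>
            (MvPowerSeries.coeff nn.1 F * MvPowerSeries.coeff nn.2 G) * CC t m n) := by
    refine Finset.sum_congr rfl fun n _ => ?_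
    rw [MvPowerSeries.coeff_mul, Finset.sum_mul]
  rw [lhs, Finset.sum_sigma' (BB m) (fun n => Finset.HasAntidiagonal.antidiagonal n)]
  rw [← Finset.sum_product' (BB m) (BB m)
    (fun n1 n2 => (MvPowerSeries.coeff n1 F * MvPowerSeries.coeff n2 G) * CC t m (n1 + n2))]
  refine Finset.sum_bij_ne_zero (fun x _ _ => x.2) ?_ ?_ ?_ ?_
  · -- maps into BB m ×ˢ BB m
    rintro ⟨n, n1, n2⟩ hmem hne
    simp only [Finset.mem_sigma, Finset.HasAntidiagonal.mem_antidiagonal] at hmem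
    obtain ⟨hn, hsum⟩ := hmem
    rw [BB, Finset.mem_Icc] at hn
    show (n1, n2) ∈ BB m ×ˢ BB m
    rw [Finset.mem_product]
    constructor
    · rw [BB, Finset.mem_Icc]
      exact ⟨zero_le, le_trans (hsum ▸ self_le_add_right n1 n2) hn.2⟩
    · rw [BB, Finset.mem_Icc]
      refine ⟨zero_le, le_trans ?_ hn.2⟩
      rw [← hsum, add_comm]
      exact self_le_add_right n2 n1
  · -- injective
    rintro ⟨n, n1, n2⟩ hmem hne ⟨n', n1', n2'⟩ hmem' hne' heq
    simp only [Finset.mem_sigma, Finset.HasAntidiagonal.mem_antidiagonal] at hmem hmem'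
    simp only [Prod.mk.injEq] at heq
    have h1 : n1 = n1' := heq.1
    have h2 : n2 = n2' := heq.2
    subst h1; subst h2
    have : n = n' := by rw [← hmem.2, ← hmem'.2]
    subst this
    rfl
  · -- surjective
    rintro ⟨n1, n2⟩ hmem hne
    have hCC : CC t m (n1 + n2) ≠ 0 := fun h0 => hne (by
      show (MvPowerSeries.coeff n1 F * MvPowerSeries.coeff n2 G) * CC t m (n1 + n2) = 0
      rw [h0, mul_zero])
    refine ⟨⟨n1 + n2, n1, n2⟩, ?_, ?_, rfl⟩
    · rw [Finset.mem_sigma]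
      exact ⟨C_support ht (le_refl m) hCC, Finset.HasAntidiagonal.mem_antidiagonal.mpr rfl⟩
    · -- the value is nonzero
      exact hne
  · -- values agree
    rintro ⟨n, n1, n2⟩ hmem hne
    simp only [Finset.mem_sigma, Finset.HasAntidiagonal.mem_antidiagonal] at hmem
    dsimp only
    rw [hmem.2]

/-! ### derivative of a product of powers -/

lemma sub_single_self (a : Unit ⊕ ℕ) (b : ℕ) (f : (Unit ⊕ ℕ) →₀ ℕ) :
    (Finsupp.single a (b + 1) + f) - Finsupp.single a 1 = Finsupp.single a b + f := by
  ext j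
  rw [Finsupp.tsub_apply, Finsupp.add_apply, Finsupp.add_apply]
  rcases eq_or_ne a j with rfl | h
  · rw [Finsupp.single_eq_same, Finsupp.single_eq_same, Finsupp.single_eq_same]
    omega
  · rw [Finsupp.single_eq_of_ne h.symm, Finsupp.single_eq_of_ne h.symm, Finsupp.single_eq_of_ne h.symm]
    omega

lemma sub_single_other {a j : Unit ⊕ ℕ} (h : j ≠ a) (b : ℕ) (f : (Unit ⊕ ℕ) →₀ ℕ) :
    (Finsupp.single a b + f) - Finsupp.single j 1
      = Finsupp.single a b + (f - Finsupp.single j 1) := by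
  ext l
  rw [Finsupp.tsub_apply, Finsupp.add_apply, Finsupp.add_apply, Finsupp.tsub_apply]
  rcases eq_or_ne j l with rfl | hjl
  · rw [Finsupp.single_eq_same]
    rw [Finsupp.single_eq_of_ne h]
    omega
  · rw [Finsupp.single_eq_of_ne hjl.symm]
    omega

lemma pd_prod (u : (Unit ⊕ ℕ) → MvPowerSeries (Unit ⊕ ℕ) ℚ) (i : Unit ⊕ ℕ)
    (n : (Unit ⊕ ℕ) →₀ ℕ) :
    pd i (n.prod fun j k => u j ^ k)
      = ∑ j ∈ n.support, (n j : ℚ) •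
          (((n - Finsupp.single j 1).prod fun j' k => u j' ^ k) * pd i (u j)) := by
  induction n using Finsupp.induction with
  | zero =>
      rw [Finsupp.prod_zero_index, pd_one]
      simp
  | single_add a b f haf hb ih =>
      obtain ⟨b', rfl⟩ : ∃ b', b = b' + 1 := ⟨b - 1, by omega⟩
      rw [prod_pow_add, pd_mul, pd_pow, ih, Finset.mul_sum]
      have hfa : f a = 0 := Finsupp.notMem_support_iff.mp haf
      have hsupp : (Finsupp.single a (b' + 1) + f).support = insert a f.support := by
        rw [Finsupp.support_add_eq, Finsupp.support_single_ne_zero a (Nat.succ_ne_zero b')]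
        · rw [Finset.insert_eq]
        · rw [Finsupp.support_single_ne_zero a (Nat.succ_ne_zero b')]
          rwa [Finset.disjoint_singleton_left]
      rw [hsupp, Finset.sum_insert haf]
      congr 1
      · have ea : ((Finsupp.single a (b' + 1) + f : (Unit ⊕ ℕ) →₀ ℕ)) a = b' + 1 := by
          rw [Finsupp.add_apply, Finsupp.single_eq_same, hfa, add_zero]
        rw [ea, sub_single_self, prod_pow_add, smul_eq_C_mul, smul_eq_C_mul]
        ring
      · refine Finset.sum_congr rfl fun j hj => ?_
        have hja : j ≠ a := fun h => haf (h ▸ hj)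
        have hv : ((Finsupp.single a (b' + 1) + f : (Unit ⊕ ℕ) →₀ ℕ)) j = f j := by
          rw [Finsupp.add_apply, Finsupp.single_eq_of_ne hja, zero_add]
        rw [hv, sub_single_other hja, prod_pow_add, smul_eq_C_mul, smul_eq_C_mul]
        ring

/-! ### the chain rule -/

lemma Jbound (ht : DefIdent t) {i j : Unit ⊕ ℕ} {q m : (Unit ⊕ ℕ) →₀ ℕ} (hq : q ≤ m)
    (h : MvPowerSeries.coeff q (pd i (chg t j)) ≠ 0) :
    j ∈ vset (m + Finsupp.single i 1) := by
  cases j with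
  | inl u => cases u; exact Finset.mem_insert_self _ _
  | inr jj =>
      rw [coeff_pd] at h
      have h2 : MvPowerSeries.coeff (q + Finsupp.single i 1) (chg t (Sum.inr jj)) ≠ 0 :=
        right_ne_zero_of_mul h
      have hws : wdeg wS (q + Finsupp.single i 1) = ((jj : ℕ) : ℤ) := u_homo ht (Sum.inr jj) _ h2
      rw [wdeg_add, wdeg_single] at hws
      have hm : wdeg wS q ≤ wdeg wS m := wdeg_mono wS_nonneg hq
      have hW : (jj : ℤ) ≤ wdeg wS (m + Finsupp.single i 1) := by
        rw [wdeg_add, wdeg_single]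
        linarith [hws, hm]
      have h0 : 0 ≤ wdeg wS (m + Finsupp.single i 1) := wdeg_nonneg wS_nonneg _
      refine Finset.mem_insert_of_mem (Finset.mem_image.mpr ⟨jj, Finset.mem_range.mpr ?_, rfl⟩)
      omega

lemma supp_subset_vset {M n : (Unit ⊕ ℕ) →₀ ℕ} (hn : n ∈ BB M) : n.support ⊆ vset M := by
  rw [BB, Finset.mem_Icc] at hn
  intro j hj
  have h1 : n j ≠ 0 := Finsupp.mem_support_iff.mp hj
  have h2 : n j ≤ NN M j := Finsupp.le_def.mp hn.2 j
  have h3 : NN M j ≠ 0 := by omega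
  have h4 : j ∈ (NN M).support := Finsupp.mem_support_iff.mpr h3
  have h5 : (NN M).support ⊆ vset M := by
    refine subset_trans Finsupp.support_finset_sum ?_
    intro l hl
    rw [Finset.mem_biUnion] at hl
    obtain ⟨x, hx, hlx⟩ := hl
    have := Finsupp.support_single_subset hlx
    rw [Finset.mem_singleton] at this
    rwa [this]
  exact h5 h4

set_option maxHeartbeats 2000000 in
lemma CR_inner (ht : DefIdent t) (F : MvPowerSeries (Unit ⊕ ℕ) ℚ) (i : Unit ⊕ ℕ)
    (m : (Unit ⊕ ℕ) →₀ ℕ) {j : Unit ⊕ ℕ} (hj : j ∈ vset (m + Finsupp.single i 1)) :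
    ∑ n ∈ BB (m + Finsupp.single i 1),
        MvPowerSeries.coeff n F * ((n j : ℚ) *
          MvPowerSeries.coeff m
            (((n - Finsupp.single j 1).prod fun j' k => chg t j' ^ k) * pd i (chg t j)))
      = MvPowerSeries.coeff m (subst (pd j F) (chg t) * pd i (chg t j)) := by
  set M := m + Finsupp.single i 1 with hM
  have hmM : m ≤ M := self_le_add_right _ _
  have rhs : MvPowerSeries.coeff m (subst (pd j F) (chg t) * pd i (chg t j))
      = ∑ n' ∈ BB M, ((n' j + 1 : ℕ) : ℚ) *
          MvPowerSeries.coeff (n' + Finsupp.single j 1) F *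
          MvPowerSeries.coeff m ((n'.prod fun j' k => chg t j' ^ k) * pd i (chg t j)) := by
    rw [MvPowerSeries.coeff_mul]
    have step : ∀ pq ∈ Finset.HasAntidiagonal.antidiagonal m,
        MvPowerSeries.coeff (pq : ((Unit ⊕ ℕ) →₀ ℕ) × ((Unit ⊕ ℕ) →₀ ℕ)).1
            (subst (pd j F) (chg t)) * MvPowerSeries.coeff pq.2 (pd i (chg t j))
          = ∑ n' ∈ BB M, (MvPowerSeries.coeff n' (pd j F) * CC t pq.1 n')
              * MvPowerSeries.coeff pq.2 (pd i (chg t j)) := by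
      intro pq hpq
      have hmem := Finset.HasAntidiagonal.mem_antidiagonal.mp hpq
      have h1 : pq.1 ≤ M := le_trans (hmem ▸ self_le_add_right _ _) hmM
      rw [subst_eq_sum ht (pd j F) h1, Finset.sum_mul]
    rw [Finset.sum_congr rfl step, Finset.sum_comm]
    refine Finset.sum_congr rfl fun n' _ => ?_
    rw [MvPowerSeries.coeff_mul m (n'.prod fun j' k => chg t j' ^ k) (pd i (chg t j)),
      Finset.mul_sum]
    refine Finset.sum_congr rfl fun pq _ => ?_
    rw [coeff_pd]
    unfold CC
    ring
  rw [rhs]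
  refine Finset.sum_bij_ne_zero (fun n _ _ => n - Finsupp.single j 1) ?_ ?_ ?_ ?_
  · -- membership
    intro n hn hne
    have hle : n - Finsupp.single j 1 ≤ n := tsub_le_self
    show n - Finsupp.single j 1 ∈ BB M
    rw [BB, Finset.mem_Icc] at hn ⊢
    exact ⟨zero_le, le_trans hle hn.2⟩
  · -- injectivity
    intro n1 h11 h12 n2 h21 h22 heq
    have key : ∀ (n : (Unit ⊕ ℕ) →₀ ℕ),
        MvPowerSeries.coeff n F * ((n j : ℚ) *
          MvPowerSeries.coeff m
            (((n - Finsupp.single j 1).prod fun j' k => chg t j' ^ k) * pd i (chg t j))) ≠ 0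
        → Finsupp.single j 1 ≤ n := by
      intro n hne0
      rw [Finsupp.single_le_iff]
      by_contra hc
      have : n j = 0 := by omega
      rw [this] at hne0
      simp at hne0
    have e1 := tsub_add_cancel_of_le (key n1 h12)
    have e2 := tsub_add_cancel_of_le (key n2 h22)
    rw [← e1, ← e2, heq]
  · -- surjectivity
    intro n' hn' hgne
    have hcoeff : MvPowerSeries.coeff m
        ((n'.prod fun j' k => chg t j' ^ k) * pd i (chg t j)) ≠ 0 := by
      intro h0
      apply hgne
      rw [h0, mul_zero]
    -- find the antidiagonal pair witnessing nonvanishing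
    rw [MvPowerSeries.coeff_mul] at hcoeff
    obtain ⟨pq, hpq, hpqne⟩ := Finset.exists_ne_zero_of_sum_ne_zero hcoeff
    have hCC : CC t pq.1 n' ≠ 0 := left_ne_zero_of_mul hpqne
    have hmdeg : mdeg n' ≤ mdeg m := by
      have hp1 : pq.1 ≤ m := (Finset.HasAntidiagonal.mem_antidiagonal.mp hpq) ▸ self_le_add_right _ _
      rcases Nat.lt_or_ge (mdeg pq.1) (mdeg n') with hlt | hge
      · exact absurd (ordc_prod (u_ord ht) n' pq.1 hlt) hCC
      · exact le_trans hge (mdeg_mono hp1)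
    have hmem : n' + Finsupp.single j 1 ∈ BB M := by
      rw [BB, Finset.mem_Icc]
      refine ⟨zero_le, Finsupp.le_def.mpr fun l => ?_⟩
      rw [BB, Finset.mem_Icc] at hn'
      rcases eq_or_ne l j with rfl | hlj
      · rw [Finsupp.add_apply, Finsupp.single_eq_same, NN_apply_mem hj]
        have h1 : n' l ≤ mdeg n' := le_mdeg n' l
        have h2 : mdeg M = mdeg m + 1 := by rw [hM, mdeg_add, mdeg_single]
        omega
      · rw [Finsupp.add_apply, Finsupp.single_eq_of_ne hlj, add_zero]
        exact Finsupp.le_def.mp hn'.2 l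
    have happ : ((n' + Finsupp.single j 1 : (Unit ⊕ ℕ) →₀ ℕ)) j = n' j + 1 := by
      rw [Finsupp.add_apply, Finsupp.single_eq_same]
    refine ⟨n' + Finsupp.single j 1, hmem, ?_, by rw [add_tsub_cancel_right]⟩
    -- nonzero value
    show MvPowerSeries.coeff (n' + Finsupp.single j 1) F *
        ((((n' + Finsupp.single j 1 : (Unit ⊕ ℕ) →₀ ℕ)) j : ℚ) *
          MvPowerSeries.coeff m
            ((((n' + Finsupp.single j 1) - Finsupp.single j 1).prod fun j' k => chg t j' ^ k) *
              pd i (chg t j))) ≠ 0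
    rw [add_tsub_cancel_right, happ]
    intro hc
    apply hgne
    push_cast at hc ⊢
    linear_combination hc
  · -- values agree
    intro n hn hne
    have hjn : Finsupp.single j 1 ≤ n := by
      rw [Finsupp.single_le_iff]
      by_contra hc
      have : n j = 0 := by omega
      rw [this] at hne
      simp at hne
    have e1 : n - Finsupp.single j 1 + Finsupp.single j 1 = n := tsub_add_cancel_of_le hjn
    have e2 : (n - Finsupp.single j 1 : (Unit ⊕ ℕ) →₀ ℕ) j + 1 = n j := by
      rw [Finsupp.tsub_apply, Finsupp.single_eq_same]
      have := Finsupp.single_le_iff.mp hjn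
      omega
    rw [e1, ← e2]
    push_cast
    ring

lemma CR_vset (ht : DefIdent t) (F : MvPowerSeries (Unit ⊕ ℕ) ℚ) (i : Unit ⊕ ℕ)
    (m : (Unit ⊕ ℕ) →₀ ℕ) :
    MvPowerSeries.coeff m (pd i (subst F (chg t)))
      = ∑ j ∈ vset (m + Finsupp.single i 1),
          MvPowerSeries.coeff m (subst (pd j F) (chg t) * pd i (chg t j)) := by
  set M := m + Finsupp.single i 1 with hM
  have s1 : MvPowerSeries.coeff m (pd i (subst F (chg t)))
      = ∑ n ∈ BB M, MvPowerSeries.coeff n F *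
          MvPowerSeries.coeff m (pd i (n.prod fun j k => chg t j ^ k)) := by
    rw [coeff_pd, subst_eq_sum ht F (le_refl M), Finset.mul_sum]
    refine Finset.sum_congr rfl fun n _ => ?_
    rw [coeff_pd]
    unfold CC
    ring
  rw [s1]
  have s2 : ∀ n ∈ BB M, MvPowerSeries.coeff n F *
      MvPowerSeries.coeff m (pd i (n.prod fun j k => chg t j ^ k))
      = ∑ j ∈ vset M, MvPowerSeries.coeff n F * ((n j : ℚ) *
          MvPowerSeries.coeff m
            (((n - Finsupp.single j 1).prod fun j' k => chg t j' ^ k) * pd i (chg t j))) := by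
    intro n hn
    rw [pd_prod, map_sum, Finset.mul_sum]
    rw [Finset.sum_congr rfl (fun j _ => by rw [MvPowerSeries.coeff_smul])]
    refine Finset.sum_subset (supp_subset_vset hn) fun j _ hj => ?_
    rw [Finsupp.notMem_support_iff.mp hj]
    simp
  rw [Finset.sum_congr rfl s2, Finset.sum_comm]
  exact Finset.sum_congr rfl fun j hj => CR_inner ht F i m hj

lemma pd_X_self (i : Unit ⊕ ℕ) :
    pd i (MvPowerSeries.X i : MvPowerSeries (Unit ⊕ ℕ) ℚ) = 1 := by
  apply MvPowerSeries.ext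
  intro m
  rw [coeff_pd, MvPowerSeries.coeff_X, MvPowerSeries.coeff_one]
  rcases eq_or_ne m 0 with rfl | h
  · rw [if_pos rfl, if_pos (zero_add (Finsupp.single i 1))]
    simp
  · rw [if_neg h, if_neg, mul_zero]
    intro hc
    apply h
    exact add_right_cancel (hc.trans (zero_add (Finsupp.single i 1)).symm)

lemma pd_inr_X_inl (b : ℕ) :
    pd (Sum.inr b : Unit ⊕ ℕ) (MvPowerSeries.X (Sum.inl ()) : MvPowerSeries (Unit ⊕ ℕ) ℚ)
      = 0 := by
  apply MvPowerSeries.ext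
  intro m
  rw [coeff_pd, MvPowerSeries.coeff_X, map_zero, if_neg, mul_zero]
  intro hc
  have := DFunLike.congr_fun hc (Sum.inr b)
  rw [Finsupp.add_apply, Finsupp.single_eq_same, Finsupp.single_eq_of_ne (by simp)] at this
  omega

lemma pd_inl_u_inr (jj : ℕ) : pd (Sum.inl () : Unit ⊕ ℕ) (chg t (Sum.inr jj)) = 0 := by
  apply MvPowerSeries.ext
  intro m
  rw [coeff_pd, map_zero, coeff_u_inr, if_neg, mul_zero]
  rw [Finsupp.add_apply, Finsupp.single_eq_same]
  omega

lemma Dx_subst (ht : DefIdent t) (F : MvPowerSeries (Unit ⊕ ℕ) ℚ) :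
    pd (Sum.inl ()) (subst F (chg t)) = subst (pd (Sum.inl ()) F) (chg t) := by
  apply MvPowerSeries.ext
  intro m
  rw [CR_vset ht F (Sum.inl ()) m]
  rw [Finset.sum_eq_single (Sum.inl () : Unit ⊕ ℕ)]
  · rw [show chg t (Sum.inl ()) = MvPowerSeries.X (Sum.inl ()) from rfl, pd_X_self, mul_one]
  · intro j hjv hjne
    cases j with
    | inl u => cases u; exact absurd rfl hjne
    | inr jj =>
        rw [pd_inl_u_inr, MvPowerSeries.mul_zero, map_zero]
  · intro hnotin
    exact absurd (Finset.mem_insert_self _ _) hnotin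

lemma V_vanish (ht : DefIdent t) {b jj : ℕ} {q : (Unit ⊕ ℕ) →₀ ℕ}
    (h : (wdeg wS q).toNat + b < jj) :
    MvPowerSeries.coeff q (pd (Sum.inr b) (chg t (Sum.inr jj))) = 0 := by
  rw [coeff_pd]
  rcases eq_or_ne (MvPowerSeries.coeff (q + Finsupp.single (Sum.inr b) 1)
    (chg t (Sum.inr jj))) 0 with h0 | h0
  · rw [h0, mul_zero]
  · exfalso
    have hw := u_homo ht (Sum.inr jj) _ h0
    rw [wdeg_add, wdeg_single] at hw
    have h1 : 0 ≤ wdeg wS q := wdeg_nonneg wS_nonneg q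
    have h2 : wS (Sum.inr b) = (b : ℤ) := rfl
    have h3 : wS (Sum.inr jj) = (jj : ℤ) := rfl
    rw [h2, h3] at hw
    push_cast at hw
    omega

lemma mul_V_vanish (ht : DefIdent t) {b jj : ℕ} {p m : (Unit ⊕ ℕ) →₀ ℕ} (hpm : p ≤ m)
    (h : (wdeg wS m).toNat + b < jj) (Z : MvPowerSeries (Unit ⊕ ℕ) ℚ) :
    MvPowerSeries.coeff p (Z * pd (Sum.inr b) (chg t (Sum.inr jj))) = 0 := by
  rw [MvPowerSeries.coeff_mul]
  refine Finset.sum_eq_zero fun pq hpq => ?_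
  have hq2 : pq.2 ≤ p := (Finset.HasAntidiagonal.mem_antidiagonal.mp hpq) ▸ le_add_self
  have hwq : (wdeg wS pq.2).toNat ≤ (wdeg wS m).toNat :=
    Int.toNat_le_toNat (wdeg_mono wS_nonneg (hq2.trans hpm))
  rw [V_vanish ht (by omega), mul_zero]

lemma CR_N (ht : DefIdent t) (F : MvPowerSeries (Unit ⊕ ℕ) ℚ) (b : ℕ)
    (m : (Unit ⊕ ℕ) →₀ ℕ) :
    MvPowerSeries.coeff m (pd (Sum.inr b) (subst F (chg t)))
      = ∑ jj ∈ Finset.range ((wdeg wS m).toNat + b + 1),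
          MvPowerSeries.coeff m
            (subst (pd (Sum.inr jj) F) (chg t) * pd (Sum.inr b) (chg t (Sum.inr jj))) := by
  rw [CR_vset ht F (Sum.inr b) m]
  have hW : wdeg wS (m + Finsupp.single (Sum.inr b : Unit ⊕ ℕ) 1) = wdeg wS m + (b : ℤ) := by
    rw [wdeg_add, wdeg_single]
    have h2 : wS (Sum.inr b) = (b : ℤ) := rfl
    rw [h2]
    push_cast
    ring
  have hv : vset (m + Finsupp.single (Sum.inr b : Unit ⊕ ℕ) 1)
      = insert (Sum.inl ())
          ((Finset.range ((wdeg wS m).toNat + b + 1)).image Sum.inr) := by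
    unfold vset
    rw [hW, Int.toNat_add (wdeg_nonneg wS_nonneg m) (Int.natCast_nonneg b), Int.toNat_natCast]
  rw [hv, Finset.sum_insert (by simp)]
  have hinl : MvPowerSeries.coeff m
      (subst (pd (Sum.inl ()) F) (chg t) * pd (Sum.inr b) (chg t (Sum.inl ()))) = 0 := by
    rw [show chg t (Sum.inl ()) = MvPowerSeries.X (Sum.inl ()) from rfl, pd_inr_X_inl,
      MvPowerSeries.mul_zero, map_zero]
  rw [hinl, zero_add, Finset.sum_image (fun x _ y _ h => Sum.inr_injective h)]

lemma Dt_succ (d : ℕ) : Dt (d + 1) = pd (Sum.inr d) := by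
  unfold Dt
  rw [if_neg (Nat.succ_ne_zero d)]
  norm_num

lemma CR_N_ext (ht : DefIdent t) (G : MvPowerSeries (Unit ⊕ ℕ) ℚ) (b : ℕ)
    {p m : (Unit ⊕ ℕ) →₀ ℕ} (hpm : p ≤ m) {K : ℕ}
    (hK : (wdeg wS m).toNat + b + 1 ≤ K) :
    MvPowerSeries.coeff p (pd (Sum.inr b) (subst G (chg t)))
      = ∑ jj ∈ Finset.range K,
          MvPowerSeries.coeff p
            (subst (pd (Sum.inr jj) G) (chg t) * pd (Sum.inr b) (chg t (Sum.inr jj))) := by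
  rw [CR_N ht G b p]
  have hmono : (wdeg wS p).toNat ≤ (wdeg wS m).toNat :=
    Int.toNat_le_toNat (wdeg_mono wS_nonneg hpm)
  refine Finset.sum_subset (Finset.range_subset_range.mpr (by omega)) fun jj _ hjj => ?_
  rw [Finset.mem_range, not_lt] at hjj
  exact mul_V_vanish ht (le_refl p) (by omega) _

lemma shift_sum (ht : DefIdent t) (G : MvPowerSeries (Unit ⊕ ℕ) ℚ) {a : ℕ} (ha : 1 ≤ a)
    (m : (Unit ⊕ ℕ) →₀ ℕ) (Z : MvPowerSeries (Unit ⊕ ℕ) ℚ) :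
    ∑ jj ∈ Finset.range ((wdeg wS m).toNat + a + 1),
        MvPowerSeries.coeff m
          ((subst (Dt jj G) (chg t) * pd (Sum.inr a) (chg t (Sum.inr jj))) * Z)
      = MvPowerSeries.coeff m (pd (Sum.inr (a - 1)) (subst G (chg t)) * Z) := by
  have rhs : MvPowerSeries.coeff m (pd (Sum.inr (a - 1)) (subst G (chg t)) * Z)
      = ∑ kk ∈ Finset.range ((wdeg wS m).toNat + a),
          MvPowerSeries.coeff m
            ((subst (pd (Sum.inr kk) G) (chg t) * pd (Sum.inr (a - 1)) (chg t (Sum.inr kk)))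
              * Z) := by
    rw [MvPowerSeries.coeff_mul]
    have hper : ∀ pq ∈ Finset.HasAntidiagonal.antidiagonal m,
        MvPowerSeries.coeff (pq : ((Unit ⊕ ℕ) →₀ ℕ) × ((Unit ⊕ ℕ) →₀ ℕ)).1
            (pd (Sum.inr (a - 1)) (subst G (chg t))) * MvPowerSeries.coeff pq.2 Z
          = ∑ kk ∈ Finset.range ((wdeg wS m).toNat + a),
              MvPowerSeries.coeff pq.1
                  (subst (pd (Sum.inr kk) G) (chg t) * pd (Sum.inr (a - 1)) (chg t (Sum.inr kk)))
                * MvPowerSeries.coeff pq.2 Z := by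
      intro pq hpq
      have hp1 : pq.1 ≤ m := (Finset.HasAntidiagonal.mem_antidiagonal.mp hpq) ▸ self_le_add_right _ _
      rw [CR_N_ext ht G (a - 1) hp1 (K := (wdeg wS m).toNat + a) (by omega), Finset.sum_mul]
    rw [Finset.sum_congr rfl hper, Finset.sum_comm]
    exact Finset.sum_congr rfl fun kk _ => (MvPowerSeries.coeff_mul m _ Z).symm
  rw [rhs, Finset.sum_range_succ']
  have h0 : MvPowerSeries.coeff m
      ((subst (Dt 0 G) (chg t) * pd (Sum.inr a) (chg t (Sum.inr 0))) * Z) = 0 := by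
    rw [V_zero ht ha, MvPowerSeries.mul_zero, MvPowerSeries.zero_mul, map_zero]
  rw [h0, add_zero]
  refine Finset.sum_congr rfl fun kk _ => ?_
  rw [show Dt (kk + 1) G = pd (Sum.inr kk) G from congrFun (Dt_succ kk) G, V_shift ht ha kk]

end WithT
end Aux

/-- If `F_0, F_1` satisfy the genus-one topological recursion relations
`∂F_1/∂t_d = (∂²F_0/∂t_{d-1}∂x)(∂F_1/∂x) + (1/24)∂³F_0/∂t_{d-1}∂x∂x` for all `d ≥ 1`,
then `G_g(x,s) = F_g(x,t(s))` satisfy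
`∂G_1/∂s_a = (∂²G_0/∂s_{a-1}∂x)(∂G_1/∂x) + (1/24)∂³G_0/∂s_{a-1}∂x∂x` for all `a ≥ 1`. -/
theorem stmt10 (t : ℕ → MvPowerSeries ℕ ℚ) (ht : DefIdent t)
    (F0 F1 : MvPowerSeries (Unit ⊕ ℕ) ℚ)
    (hF : ∀ d : ℕ, 1 ≤ d →
      Dt d F1 = Dt (d - 1) (Dx F0) * Dx F1 + ((24 : ℚ)⁻¹ : ℚ) • Dt (d - 1) (Dx (Dx F0))) :
    ∀ a : ℕ, 1 ≤ a →
      pd (Sum.inr a) (subst F1 (chg t)) =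
        pd (Sum.inr (a - 1)) (Dx (subst F0 (chg t))) * Dx (subst F1 (chg t)) +
          ((24 : ℚ)⁻¹ : ℚ) • pd (Sum.inr (a - 1)) (Dx (Dx (subst F0 (chg t)))) := by
  intro a ha
  simp only [Dx] at hF ⊢
  rw [Aux.Dx_subst ht F0, Aux.Dx_subst ht F1, Aux.Dx_subst ht (pd (Sum.inl ()) F0)]
  apply MvPowerSeries.ext
  intro m
  rw [map_add, MvPowerSeries.coeff_smul, Aux.CR_N ht F1 a m]
  have hstep : ∀ jj ∈ Finset.range ((Aux.wdeg Aux.wS m).toNat + a + 1),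
      MvPowerSeries.coeff m
          (subst (pd (Sum.inr jj) F1) (chg t) * pd (Sum.inr a) (chg t (Sum.inr jj)))
        = MvPowerSeries.coeff m
            ((subst (Dt jj (pd (Sum.inl ()) F0)) (chg t) * pd (Sum.inr a) (chg t (Sum.inr jj)))
              * subst (pd (Sum.inl ()) F1) (chg t))
          + (24 : ℚ)⁻¹ * MvPowerSeries.coeff m
              ((subst (Dt jj (pd (Sum.inl ()) (pd (Sum.inl ()) F0))) (chg t)
                * pd (Sum.inr a) (chg t (Sum.inr jj))) * 1) := by
    intro jj _
    rw [show pd (Sum.inr jj) F1 = Dt (jj + 1) F1 from (congrFun (Aux.Dt_succ jj) F1).symm,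
      hF (jj + 1) (by omega)]
    simp only [Nat.add_sub_cancel]
    rw [Aux.subst_add ht, Aux.subst_mul ht, Aux.subst_smul ht]
    rw [add_mul, map_add, smul_mul_assoc, MvPowerSeries.coeff_smul]
    congr 1
    · rw [mul_right_comm]
    · rw [mul_one]
  rw [Finset.sum_congr rfl hstep, Finset.sum_add_distrib, ← Finset.mul_sum]
  rw [Aux.shift_sum ht (pd (Sum.inl ()) F0) ha m (subst (pd (Sum.inl ()) F1) (chg t))]
  rw [Aux.shift_sum ht (pd (Sum.inl ()) (pd (Sum.inl ()) F0)) ha m 1]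
  rw [mul_one]
end
end
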